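/- arXiv:2212.09087 — 13 statements merged into one kernel-verified Lean document; each statement's English description precedes it below -/
import Mathlib

section
/- Let A be a commutative Noetherian ring and let I be an ideal of A containing a nonzerodivisor of A. Then Ext^1_A(A/I, A) = 0 if and only if (A : I) = A. -/
set_option maxHeartbeats 1000000
set_option synthInstance.maxHeartbeats 400000

open CategoryTheory

universe u

/-- The `i`-th Ext module `Ext_A^i(M, N)` over a commutative ring `A`. -/
noncomputable def ExtModule (A : Type u) [CommRing A] (M N : Type u)
    [AddCommGroup M] [Module A M] [AddCommGroup N] [Module A N] (i : ℕ) : ModuleCat.{u} A :=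
  ((Ext A (ModuleCat.{u} A) i).obj (Opposite.op (ModuleCat.of A M))).obj (ModuleCat.of A N)

/-- A module is torsion-free if nonzerodivisors of the ring act injectively. -/
def IsTorsionFreeModule (A : Type*) [CommRing A] (M : Type*) [AddCommGroup M]
    [Module A M] : Prop :=
  ∀ a ∈ nonZeroDivisors A, ∀ m : M, a • m = 0 → m = 0

/-- The grade of an ideal `J`: the length of a maximal regular sequence contained in `J`. -/
noncomputable def Ideal.grade {A : Type*} [CommRing A] (J : Ideal A) : ℕ∞ :=
  sSup {n : ℕ∞ | ∃ rs : List A, (rs.length : ℕ∞) = n ∧ (∀ r ∈ rs, r ∈ J) ∧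
    RingTheory.Sequence.IsWeaklyRegular A rs}

/-- A Cohen–Macaulay local ring: Noetherian local with depth equal to Krull dimension. -/
def IsCohenMacaulayLocalRing (A : Type*) [CommRing A] : Prop :=
  IsNoetherianRing A ∧ ∃ _ : IsLocalRing A,
    ((IsLocalRing.maximalIdeal A).grade : WithBot ℕ∞) = ringKrullDim A

/-- A Cohen–Macaulay ring: Noetherian, all localizations at primes are CM local rings. -/
def IsCohenMacaulayRing (A : Type*) [CommRing A] : Prop :=
  IsNoetherianRing A ∧ ∀ (p : Ideal A) [p.IsPrime],
    IsCohenMacaulayLocalRing (Localization.AtPrime p)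

/-- A Gorenstein local ring: Noetherian local of finite self-injective dimension,
expressed via vanishing of `Ext^{n+1}(A/I, A)` for all ideals `I` (Baer's criterion). -/
def IsGorensteinLocalRing (A : Type u) [CommRing A] : Prop :=
  IsLocalRing A ∧ IsNoetherianRing A ∧
    ∃ n : ℕ, ∀ I : Ideal A, Subsingleton (ExtModule A (A ⧸ I) A (n + 1))

/-- A Gorenstein ring: Noetherian, all localizations at maximal ideals are Gorenstein local. -/
def IsGorensteinRing (A : Type u) [CommRing A] : Prop :=
  IsNoetherianRing A ∧ ∀ (m : Ideal A) [m.IsMaximal],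
    IsGorensteinLocalRing (Localization.AtPrime m)

/-- Generically Gorenstein: the localization at every associated prime is Gorenstein. -/
def IsGenericallyGorenstein (A : Type u) [CommRing A] : Prop :=
  ∀ (p : Ideal A) [p.IsPrime], p ∈ associatedPrimes A A →
    IsGorensteinLocalRing (Localization.AtPrime p)

/-- The trace ideal of a module: the sum of the images of all linear maps to the ring. -/
def traceIdeal (A : Type*) [CommRing A] (M : Type*) [AddCommGroup M] [Module A M] :
    Ideal A :=
  ⨆ f : M →ₗ[A] A, LinearMap.range f

/-- The image of an ideal inside the total ring of fractions. -/
noncomputable def Ideal.toFrac {A : Type u} [CommRing A] (I : Ideal A) :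
    Submodule A (FractionRing A) :=
  Submodule.map (Algebra.linearMap A (FractionRing A)) I

/-- The conductor `(R : S)` of a birational extension `R ⊆ S ⊆ Q(R)`,
as a submodule of the total ring of fractions. -/
noncomputable def conductorFrac (R : Type u) [CommRing R]
    (S : Subalgebra R (FractionRing R)) : Submodule R (FractionRing R) :=
  (1 : Submodule R (FractionRing R)) / Subalgebra.toSubmodule S

/-- `M ∈ Ω CM(A)`: there is an exact sequence `0 → M → P → N → 0` with `P` a finitely
generated projective `A`-module and `N` a finitely generated torsion-free
(equivalently, over a 1-dimensional CM ring, maximal Cohen–Macaulay) `A`-module. -/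
def InSyzygyOfCM (A : Type u) [CommRing A] (M : Type u) [AddCommGroup M] [Module A M] :
    Prop :=
  ∃ (P N : Type u) (_ : AddCommGroup P) (_ : Module A P) (_ : AddCommGroup N)
    (_ : Module A N), Module.Projective A P ∧ Module.Finite A P ∧ Module.Finite A N ∧
      IsTorsionFreeModule A N ∧
      ∃ (f : M →ₗ[A] P) (g : P →ₗ[A] N),
        Function.Injective f ∧ Function.Surjective g ∧ LinearMap.range f = LinearMap.ker g

/-!
Resolve `A ⧸ I` starting from the projection `A → A ⧸ I`, whose kernel is `I`: then
`Ext¹(A ⧸ I, A) = 0` exactly when every `A`-linear map `I → A` extends to `A`, i.e. is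
multiplication by an element of `A`. If `s ∈ I` is a nonzerodivisor, every `f : I → A` is
multiplication by `f s / s ∈ (A : I)`, and every element of `(A : I)` defines such a map; so the
extension property says precisely that `(A : I) = A`.
-/

universe v

open Limits

namespace LinearMap

variable {R : Type*} [Ring R] {P₂ P₁ M N : Type*} [AddCommGroup P₂] [Module R P₂]
  [AddCommGroup P₁] [Module R P₁] [AddCommGroup M] [Module R M] [AddCommGroup N] [Module R N]

theorem exists_comp_rangeRestrict_eq_of_exact {d₂ : P₂ →ₗ[R] P₁} {d₁ : P₁ →ₗ[R] M}
    (hd : Function.Exact d₂ d₁) {g : P₁ →ₗ[R] N} (hg : g ∘ₗ d₂ = 0) :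
    ∃ g' : range d₁ →ₗ[R] N, g' ∘ₗ d₁.rangeRestrict = g := by
  have hex : Function.Exact d₂ d₁.rangeRestrict := by
    simpa [Function.Exact, ← Subtype.val_inj] using hd
  have hle : range d₂ ≤ ker g := by
    rintro _ ⟨x, rfl⟩
    exact congr($hg x)
  refine ⟨(range d₂).liftQ g hle ∘ₗ
    (hex.linearEquivOfSurjective d₁.surjective_rangeRestrict).symm, LinearMap.ext fun x => ?_⟩
  simp [hex.linearEquivOfSurjective_symm_apply]

theorem forall_exists_comp_eq_iff_of_exact {d₂ : P₂ →ₗ[R] P₁} {d₁ : P₁ →ₗ[R] M}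
    (hd : Function.Exact d₂ d₁) :
    (∀ g : P₁ →ₗ[R] N, g ∘ₗ d₂ = 0 → ∃ f : M →ₗ[R] N, f ∘ₗ d₁ = g) ↔
      ∀ g : range d₁ →ₗ[R] N, ∃ f : M →ₗ[R] N, f ∘ₗ (range d₁).subtype = g := by
  constructor
  · intro H g
    obtain ⟨f, hf⟩ := H (g ∘ₗ d₁.rangeRestrict) (by
      ext x
      have : d₁.rangeRestrict (d₂ x) = 0 := Subtype.ext (hd.apply_apply_eq_zero x)
      simp [this])
    refine ⟨f, (cancel_right d₁.surjective_rangeRestrict).1 ?_⟩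
    rw [comp_assoc, ← hf]
    rfl
  · intro H g hg
    obtain ⟨g', rfl⟩ := exists_comp_rangeRestrict_eq_of_exact hd hg
    obtain ⟨f, rfl⟩ := H g'
    exact ⟨f, rfl⟩

end LinearMap

namespace CategoryTheory

variable {C : Type u} [Category.{v} C] [Abelian C] [EnoughProjectives C]

lemma Projective.d_comp_eq_zero {X Y : C} (f : X ⟶ Y) : Projective.d f ≫ f = 0 :=
  (Category.assoc _ _ _).trans (by rw [kernel.condition]; exact comp_zero)

namespace ProjectiveResolution

variable {P Z : C} (π : P ⟶ Z)

-- `ProjectiveResolution.ofComplex` with `Projective.π Z` replaced by the given epimorphism `π`.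
noncomputable def ofEpiComplex : ChainComplex C ℕ :=
  ChainComplex.mk' P (Projective.syzygies π) (Projective.d π)
    (fun f => ⟨_, Projective.d f, Projective.d_comp_eq_zero f⟩)

lemma ofEpiComplex_d_1_0 : (ofEpiComplex π).d 1 0 = Projective.d π := by
  simp [ofEpiComplex]

lemma ofEpiComplex_exactAt_succ (n : ℕ) : (ofEpiComplex π).ExactAt (n + 1) := by
  rw [HomologicalComplex.exactAt_iff' _ (n + 1 + 1) (n + 1) n (by simp) (by simp)]
  refine (ShortComplex.exact_iff_of_iso ?_).2 (exact_d_f ((ofEpiComplex π).d (n + 1) n))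
  exact ShortComplex.isoMk
    (ChainComplex.mk'XIso P (Projective.syzygies π) (Projective.d π)
      (fun f => ⟨_, Projective.d f, Projective.d_comp_eq_zero f⟩) n)
    (Iso.refl _) (Iso.refl _)
    ((ChainComplex.mk'_d _ _ _ _ n).symm.trans (Category.comp_id _).symm)
    ((Category.id_comp _).trans (Category.comp_id _).symm)

instance [Projective P] (n : ℕ) : Projective ((ofEpiComplex π).X n) := by
  obtain (_ | _ | _ | n) := n
  · assumption
  all_goals apply Projective.projective_over

noncomputable def ofEpi [Projective P] [Epi π] : ProjectiveResolution Z where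
  complex := ofEpiComplex π
  π := (ChainComplex.toSingle₀Equiv _ _).symm
    ⟨π, by rw [ofEpiComplex_d_1_0]; exact Projective.d_comp_eq_zero π⟩
  quasiIso := ⟨fun n => by
    cases n
    · rw [ChainComplex.quasiIsoAt₀_iff, ShortComplex.quasiIso_iff_of_zeros']
      · refine (ShortComplex.exact_and_epi_g_iff_of_iso ?_).2
          ⟨exact_d_f π, by dsimp; infer_instance⟩
        refine ShortComplex.isoMk (Iso.refl _) (Iso.refl _) (Iso.refl _) ?_
          ((Category.id_comp _).trans <| .trans
            (ChainComplex.toSingle₀Equiv_symm_apply_f_zero (C := ofEpiComplex π) π _).symm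
            (Category.comp_id _).symm)
        change 𝟙 _ ≫ Projective.d π = (ofEpiComplex π).d 1 0 ≫ 𝟙 _
        rw [ofEpiComplex_d_1_0, Category.id_comp]
        exact (Category.comp_id _).symm
      all_goals rfl
    · rw [quasiIsoAt_iff_exactAt']
      · apply ofEpiComplex_exactAt_succ
      · apply ChainComplex.exactAt_succ_single_obj⟩

lemma ofEpi_π_f_zero [Projective P] [Epi π] : (ofEpi π).π.f 0 = π :=
  ChainComplex.toSingle₀Equiv_symm_apply_f_zero _ _

theorem isZero_ext_one_iff {R : Type*} [Ring R] [Linear R C] {X : C}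
    (P : ProjectiveResolution X) (Y : C) :
    IsZero (((Ext R C 1).obj (Opposite.op X)).obj Y) ↔
      ∀ g : P.complex.X 1 ⟶ Y, P.complex.d 2 1 ≫ g = 0 →
        ∃ h : P.complex.X 0 ⟶ Y, P.complex.d 1 0 ≫ h = g := by
  rw [(P.isoExt 1 Y).isZero_iff, ← HomologicalComplex.exactAt_iff_isZero_homology,
    HomologicalComplex.exactAt_iff' _ 0 1 2 (by simp) (by simp),
    ShortComplex.moduleCat_exact_iff]
  exact Iff.rfl

end ProjectiveResolution

theorem ProjectiveResolution.subsingleton_ext_one_iff {R : Type u} [CommRing R] [Small.{v} R]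
    {M : ModuleCat.{v} R} (P : ProjectiveResolution M) (N : ModuleCat.{v} R) :
    Subsingleton (((Ext R (ModuleCat.{v} R) 1).obj (Opposite.op M)).obj N) ↔
      ∀ g : LinearMap.ker (P.π.f 0).hom →ₗ[R] N,
        ∃ f : P.complex.X 0 →ₗ[R] N, f ∘ₗ (LinearMap.ker (P.π.f 0).hom).subtype = g := by
  have hd : Function.Exact (P.complex.d 2 1).hom (P.complex.d 1 0).hom :=
    (ShortComplex.ShortExact.moduleCat_exact_iff_function_exact _).1 (P.exact_succ 0)
  rw [← ModuleCat.isZero_iff_subsingleton, P.isZero_ext_one_iff,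
    ← P.exact₀.moduleCat_range_eq_ker, ← LinearMap.forall_exists_comp_eq_iff_of_exact hd]
  constructor
  · intro H g hg
    obtain ⟨f, hf⟩ := H (ModuleCat.ofHom g) (ModuleCat.hom_ext hg)
    exact ⟨f.hom, congr(($hf).hom)⟩
  · intro H g hg
    obtain ⟨f, hf⟩ := H g.hom congr(($hg).hom)
    exact ⟨ModuleCat.ofHom f, ModuleCat.hom_ext hf⟩

end CategoryTheory

theorem ModuleCat.subsingleton_ext_one_iff_of_epi {R : Type u} [CommRing R] [Small.{v} R]
    {P M : ModuleCat.{v} R} (π : P ⟶ M) [Projective P] [Epi π] (N : ModuleCat.{v} R) :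
    Subsingleton (((Ext R (ModuleCat.{v} R) 1).obj (Opposite.op M)).obj N) ↔
      ∀ g : LinearMap.ker π.hom →ₗ[R] N,
        ∃ f : P →ₗ[R] N, f ∘ₗ (LinearMap.ker π.hom).subtype = g := by
  rw [(ProjectiveResolution.ofEpi π).subsingleton_ext_one_iff,
    ProjectiveResolution.ofEpi_π_f_zero]
  rfl

namespace Ideal

variable {A : Type u} [CommRing A] {I : Ideal A}

theorem mem_one_div_toFrac_iff {x : FractionRing A} :
    x ∈ 1 / I.toFrac ↔ ∀ y ∈ I, ∃ a : A, algebraMap A _ a = x * algebraMap A _ y := by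
  simp [Submodule.mem_div_iff_forall_mul_mem, Ideal.toFrac, Submodule.mem_one]

theorem one_le_one_div_toFrac : 1 ≤ 1 / I.toFrac := fun x hx => by
  obtain ⟨a, rfl⟩ := Submodule.mem_one.1 hx
  exact mem_one_div_toFrac_iff.2 fun y _ => ⟨a * y, map_mul _ _ _⟩

theorem exists_linearMap_of_mem_one_div_toFrac {x : FractionRing A} (hx : x ∈ 1 / I.toFrac) :
    ∃ f : I →ₗ[A] A, ∀ y : I, algebraMap A _ (f y) = x * algebraMap A _ y := by
  choose f hf using fun y : I => mem_one_div_toFrac_iff.1 hx y y.2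
  have inj := IsFractionRing.injective A (FractionRing A)
  refine ⟨{ toFun := f, map_add' := fun y z => inj ?_, map_smul' := fun c y => inj ?_ }, hf⟩
  · simp [hf, mul_add]
  · simp only [hf, map_mul, smul_eq_mul, RingHom.id_apply, Submodule.coe_smul]
    ring

theorem exists_mem_one_div_toFrac_of_linearMap {s : A} (hsI : s ∈ I)
    (hs : s ∈ nonZeroDivisors A) (f : I →ₗ[A] A) :
    ∃ x ∈ 1 / I.toFrac, ∀ y : I, algebraMap A _ (f y) = x * algebraMap A _ y := by
  set x := IsLocalization.mk' (FractionRing A) (f ⟨s, hsI⟩) (⟨s, hs⟩ : nonZeroDivisors A)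
  have hx : ∀ y : I, algebraMap A _ (f y) = x * algebraMap A _ y := by
    intro y
    have hswap : s * f y = y * f ⟨s, hsI⟩ := by
      rw [← smul_eq_mul, ← map_smul, ← smul_eq_mul, ← map_smul]
      congr 1
      exact Subtype.ext (mul_comm _ _)
    apply (IsLocalization.map_units _ (⟨s, hs⟩ : nonZeroDivisors A)).mul_left_cancel
    calc algebraMap A _ s * algebraMap A _ (f y)
        = algebraMap A _ y * (x * algebraMap A _ s) := by
          rw [IsLocalization.mk'_spec, ← map_mul, ← map_mul, hswap]
      _ = algebraMap A _ s * (x * algebraMap A _ y) := by ring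
  exact ⟨x, mem_one_div_toFrac_iff.2 fun y hy => ⟨f ⟨y, hy⟩, hx ⟨y, hy⟩⟩, hx⟩

theorem one_div_toFrac_eq_one_iff {s : A} (hsI : s ∈ I) (hs : s ∈ nonZeroDivisors A) :
    1 / I.toFrac = 1 ↔ ∀ f : I →ₗ[A] A, ∃ h : A →ₗ[A] A, h ∘ₗ I.subtype = f := by
  have inj := IsFractionRing.injective A (FractionRing A)
  constructor
  · intro H f
    obtain ⟨x, hxI, hx⟩ := exists_mem_one_div_toFrac_of_linearMap hsI hs f
    obtain ⟨a, rfl⟩ := Submodule.mem_one.1 (H ▸ hxI)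
    exact ⟨a • LinearMap.id, LinearMap.ext fun y => inj (by simp [hx])⟩
  · intro H
    refine le_antisymm (fun x hx => ?_) one_le_one_div_toFrac
    obtain ⟨f, hf⟩ := exists_linearMap_of_mem_one_div_toFrac hx
    obtain ⟨h, rfl⟩ := H f
    refine Submodule.mem_one.2 ⟨h 1, ?_⟩
    apply (IsLocalization.map_units _ (⟨s, hs⟩ : nonZeroDivisors A)).mul_right_cancel
    rw [← map_mul, mul_comm, ← smul_eq_mul, ← h.map_smul, smul_eq_mul, mul_one]
    exact hf ⟨s, hsI⟩

end Ideal

theorem ext_one_vanishes_iff_colon_eq_self_general (A : Type u) [CommRing A]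
    (I : Ideal A) (hreg : ∃ a ∈ I, a ∈ nonZeroDivisors A) :
    Subsingleton (↥(ExtModule A (A ⧸ I) A 1)) ↔
      (1 : Submodule A (FractionRing A)) / I.toFrac = 1 := by
  obtain ⟨s, hsI, hs⟩ := hreg
  have : Epi (ModuleCat.ofHom I.mkQ) := (ModuleCat.epi_iff_surjective _).2 I.mkQ_surjective
  rw [ExtModule, ModuleCat.subsingleton_ext_one_iff_of_epi (ModuleCat.ofHom I.mkQ),
    ModuleCat.hom_ofHom, I.ker_mkQ, Ideal.one_div_toFrac_eq_one_iff hsI hs]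

/-- `Ext¹_A(A/I, A) = 0` iff `(A : I) = A`, for an ideal `I` containing a
nonzerodivisor of the commutative Noetherian ring `A`. -/
theorem ext_one_vanishes_iff_colon_eq_self (A : Type u) [CommRing A] [IsNoetherianRing A]
    (I : Ideal A) (hreg : ∃ a ∈ I, a ∈ nonZeroDivisors A) :
    Subsingleton (↥(ExtModule A (A ⧸ I) A 1)) ↔
      (1 : Submodule A (FractionRing A)) / I.toFrac = 1 :=
  ext_one_vanishes_iff_colon_eq_self_general A I hreg
end

section
/- Let A be a commutative Noetherian ring and let I be a reflexive ideal of A that contains a nonzerodivisor of A and satisfies (I : I) = A. Then grade_A(tr_A(I)) ≥ 2, where tr_A(I) = (A : I)I is the trace ideal of I. -/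
set_option maxHeartbeats 1000000
set_option synthInstance.maxHeartbeats 400000

open CategoryTheory

universe u

/-! Reflexivity of `I` gives `(A : (A : I)) ⊆ I`. Since `(A : I) I ⊆ tr(I)`, any `x` with
`x tr(I) ⊆ A` satisfies `x I ⊆ (A : (A : I)) ⊆ I`, so `x ∈ (I : I) = A`; that is,
`(A : tr(I)) = A`. Take a nonzerodivisor `a ∈ I ⊆ tr(I)`. If an associated prime
`p = ann(c mod a)` of `A/aA` contained `tr(I)`, then `c/a ∈ (A : tr(I)) = A`, i.e. `c ∈ aA`,
which is absurd. By prime avoidance some `b ∈ tr(I)` is regular on `A/aA`, and `a, b` is a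
regular sequence in `tr(I)`. -/

lemma exists_mem_isSMulRegular_of_forall_not_le {R M : Type*} [CommRing R] [IsNoetherianRing R]
    [AddCommGroup M] [Module R M] [Module.Finite R M] {J : Ideal R}
    (hJ : ∀ p ∈ associatedPrimes R M, ¬ J ≤ p) : ∃ b ∈ J, IsSMulRegular M b := by
  by_contra! h
  have hcover : (J : Set R) ⊆ ⋃ p ∈ associatedPrimes R M, (p : Set R) := by
    rw [biUnion_associatedPrimes_eq_compl_regular R M]
    exact h
  obtain ⟨p, hp, hJp⟩ := (Ideal.subset_union_prime_finite (associatedPrimes.finite R M) (f := id)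
    ⊥ ⊥ fun p hp _ _ ↦ hp.isPrime).mp hcover
  exact hJ p hp hJp

lemma LinearMap.range_le_traceIdeal {A M : Type*} [CommRing A] [AddCommGroup M] [Module A M]
    (f : M →ₗ[A] A) : LinearMap.range f ≤ traceIdeal A M :=
  le_iSup (fun f : M →ₗ[A] A ↦ LinearMap.range f) f

lemma le_traceIdeal {A : Type*} [CommRing A] (I : Ideal A) : I ≤ traceIdeal A I :=
  fun a ha ↦ I.subtype.range_le_traceIdeal ⟨⟨a, ha⟩, rfl⟩

section FractionRing

variable {A : Type*} [CommRing A]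

noncomputable def LinearMap.restrictOne {M : Type*} [AddCommGroup M] [Module A M]
    (g : M →ₗ[A] FractionRing A) (hg : ∀ m, g m ∈ (1 : Submodule A (FractionRing A))) :
    M →ₗ[A] A :=
  (LinearEquiv.ofInjective (Algebra.linearMap A (FractionRing A))
      (IsFractionRing.injective A (FractionRing A))).symm.toLinearMap ∘ₗ
    g.codRestrict (LinearMap.range (Algebra.linearMap A (FractionRing A))) fun m ↦ by
      rw [← Submodule.one_eq_range]; exact hg m

lemma LinearMap.algebraMap_restrictOne {M : Type*} [AddCommGroup M] [Module A M]
    (g : M →ₗ[A] FractionRing A) (hg : ∀ m, g m ∈ (1 : Submodule A (FractionRing A))) (m : M) :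
    algebraMap A (FractionRing A) (g.restrictOne hg m) = g m :=
  LinearEquiv.ofInjective_symm_apply (Algebra.linearMap A (FractionRing A))
    (h := IsFractionRing.injective A (FractionRing A)) _

lemma Ideal.one_div_toFrac_mul_toFrac_le_traceIdeal (I : Ideal A) :
    (1 : Submodule A (FractionRing A)) / I.toFrac * I.toFrac ≤ (traceIdeal A I).toFrac := by
  refine Submodule.mul_le.mpr fun y hy _ ⟨i, hi, hiy⟩ ↦ ?_
  subst hiy
  let g : I →ₗ[A] FractionRing A :=
    LinearMap.mulLeft A y ∘ₗ Algebra.linearMap A (FractionRing A) ∘ₗ I.subtype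
  have hg : ∀ j, g j ∈ (1 : Submodule A (FractionRing A)) := fun j ↦
    Submodule.mem_div_iff_forall_mul_mem.mp hy _ ⟨j, j.2, rfl⟩
  exact ⟨g.restrictOne hg ⟨i, hi⟩, (g.restrictOne hg).range_le_traceIdeal ⟨⟨i, hi⟩, rfl⟩,
    g.algebraMap_restrictOne hg _⟩

lemma Ideal.mk'_apply_mul_algebraMap {I : Ideal A} {a : A} (ha : a ∈ I)
    (hreg : a ∈ nonZeroDivisors A) (f : Module.Dual A I) (i : I) :
    IsLocalization.mk' (FractionRing A) (f ⟨a, ha⟩) ⟨a, hreg⟩ * algebraMap A _ i =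
      algebraMap A _ (f i) := by
  have key : (i : A) * f ⟨a, ha⟩ = f i * a := by
    have hswap : (i : A) • (⟨a, ha⟩ : I) = a • i := Subtype.ext (mul_comm _ _)
    rw [← smul_eq_mul, ← map_smul, hswap, map_smul, smul_eq_mul, mul_comm]
  rw [mul_comm, IsLocalization.mul_mk'_eq_mk'_of_mul, IsLocalization.mk'_eq_iff_eq_mul, key,
    map_mul]

lemma Ideal.mk'_apply_mem_one_div_toFrac {I : Ideal A} {a : A} (ha : a ∈ I)
    (hreg : a ∈ nonZeroDivisors A) (f : Module.Dual A I) :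
    IsLocalization.mk' (FractionRing A) (f ⟨a, ha⟩) ⟨a, hreg⟩ ∈
      (1 : Submodule A (FractionRing A)) / I.toFrac :=
  Submodule.mem_div_iff_forall_mul_mem.mpr fun _ ⟨i, hi, hiy⟩ ↦
    hiy ▸ Ideal.mk'_apply_mul_algebraMap ha hreg f ⟨i, hi⟩ ▸ Submodule.mem_one.mpr ⟨_, rfl⟩

/- For `x ∈ (A : (A : I))`, the functional `f ↦ x f(a)/a` on `Dual A I` is evaluation at some
`i₀ ∈ I`; evaluating it at the inclusion `I → A` gives `x = i₀`. -/
lemma Ideal.one_div_one_div_toFrac_le {I : Ideal A} [Module.IsReflexive A I]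
    (hreg : ∃ a ∈ I, a ∈ nonZeroDivisors A) :
    (1 : Submodule A (FractionRing A)) / (1 / I.toFrac) ≤ I.toFrac := by
  intro x hx
  obtain ⟨a, ha, hreg⟩ := hreg
  let u := IsLocalization.mk' (FractionRing A) 1 (⟨a, hreg⟩ : nonZeroDivisors A)
  let φ : Module.Dual A I →ₗ[A] FractionRing A := LinearMap.mulLeft A (x * u) ∘ₗ
    Algebra.linearMap A (FractionRing A) ∘ₗ Module.Dual.eval A I ⟨a, ha⟩
  have hφ : ∀ f, φ f ∈ (1 : Submodule A (FractionRing A)) := fun f ↦ by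
    have hφf : φ f = x * IsLocalization.mk' (FractionRing A) (f ⟨a, ha⟩) ⟨a, hreg⟩ := by
      rw [IsLocalization.mk'_eq_mul_mk'_one]
      exact (mul_right_comm _ _ _).trans (mul_assoc _ _ _)
    exact hφf ▸ Submodule.mem_div_iff_forall_mul_mem.mp hx _
      (I.mk'_apply_mem_one_div_toFrac ha hreg f)
  obtain ⟨i₀, hi₀⟩ := (Module.bijective_dual_eval A I).surjective (φ.restrictOne hφ)
  refine ⟨i₀, i₀.2, ?_⟩
  calc algebraMap A (FractionRing A) i₀
      = algebraMap A (FractionRing A) (φ.restrictOne hφ I.subtype) := by rw [← hi₀]; rfl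
    _ = x * (u * algebraMap A (FractionRing A) a) := by
      rw [φ.algebraMap_restrictOne, ← mul_assoc]; rfl
    _ = x := by rw [IsLocalization.mk'_spec, map_one, mul_one]

lemma one_div_traceIdeal_toFrac_le_one {I : Ideal A} [Module.IsReflexive A I]
    (hreg : ∃ a ∈ I, a ∈ nonZeroDivisors A) (hII : I.toFrac / I.toFrac = 1) :
    (1 : Submodule A (FractionRing A)) / (traceIdeal A I).toFrac ≤ 1 := by
  set T := (traceIdeal A I).toFrac
  have hT : (1 : Submodule A (FractionRing A)) / T * T ≤ 1 := Submodule.le_div_iff_mul_le.mp le_rfl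
  have hI : (1 : Submodule A (FractionRing A)) / T * I.toFrac ≤ I.toFrac := by
    refine le_trans ?_ (I.one_div_one_div_toFrac_le hreg)
    rw [Submodule.le_div_iff_mul_le, mul_assoc, Submodule.mul_comm I.toFrac]
    exact (mul_le_mul_right I.one_div_toFrac_mul_toFrac_le_traceIdeal _).trans hT
  calc (1 : Submodule A (FractionRing A)) / T ≤ I.toFrac / I.toFrac :=
        Submodule.le_div_iff_mul_le.mpr hI
    _ = 1 := hII

lemma Ideal.not_le_of_mem_associatedPrimes_quotSMulTop [IsNoetherianRing A] (J : Ideal A)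
    {a : A} (hreg : a ∈ nonZeroDivisors A)
    (hJ : (1 : Submodule A (FractionRing A)) / J.toFrac ≤ 1)
    {p : Ideal A} (hp : p ∈ associatedPrimes A (QuotSMulTop a A)) : ¬ J ≤ p := by
  intro hJp
  obtain ⟨hprime, c', rfl⟩ := isAssociatedPrime_iff.mp hp
  obtain ⟨c, rfl⟩ := Submodule.Quotient.mk_surjective _ c'
  have hmem : IsLocalization.mk' (FractionRing A) c (⟨a, hreg⟩ : nonZeroDivisors A) ∈
      (1 : Submodule A (FractionRing A)) / J.toFrac := by
    refine Submodule.mem_div_iff_forall_mul_mem.mpr fun _ ⟨t, ht, hty⟩ ↦ ?_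
    have htc := hJp ht
    rw [Submodule.mem_colon_singleton, Submodule.mem_bot, ← Submodule.Quotient.mk_smul,
      Submodule.Quotient.mk_eq_zero, Submodule.mem_smul_pointwise_iff_exists] at htc
    obtain ⟨d, -, hd⟩ := htc
    refine Submodule.mem_one.mpr ⟨d, ?_⟩
    subst hty
    rw [Algebra.linearMap_apply, mul_comm, IsLocalization.mul_mk'_eq_mk'_of_mul, eq_comm,
      IsLocalization.mk'_eq_iff_eq_mul, ← map_mul, ← smul_eq_mul t c, ← hd, smul_eq_mul, mul_comm]
  obtain ⟨e, he⟩ := Submodule.mem_one.mp (hJ hmem)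
  apply hprime.ne_top
  rw [Ideal.eq_top_iff_one, Submodule.mem_colon_singleton, one_smul, Submodule.mem_bot,
    Submodule.Quotient.mk_eq_zero, Submodule.mem_smul_pointwise_iff_exists]
  refine ⟨e, trivial, IsFractionRing.injective A (FractionRing A) ?_⟩
  rw [smul_eq_mul, map_mul, mul_comm, he, IsLocalization.mk'_spec]

lemma Ideal.two_le_grade_of_one_div_toFrac_le_one [IsNoetherianRing A] {J : Ideal A} {a : A}
    (ha : a ∈ J) (hreg : a ∈ nonZeroDivisors A)
    (hJ : (1 : Submodule A (FractionRing A)) / J.toFrac ≤ 1) : 2 ≤ J.grade := by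
  obtain ⟨b, hb, hbreg⟩ := exists_mem_isSMulRegular_of_forall_not_le fun p hp ↦
    J.not_le_of_mem_associatedPrimes_quotSMulTop hreg hJ hp
  have hseq : RingTheory.Sequence.IsWeaklyRegular A [a, b] :=
    .cons (Module.Flat.isSMulRegular_of_nonZeroDivisors hreg) (.cons hbreg (.nil _ _))
  exact le_sSup ⟨[a, b], by norm_num, by simp [ha, hb], hseq⟩

end FractionRing

/-- if `I` is a reflexive ideal of a commutative Noetherian ring `A`
containing a nonzerodivisor with `(I : I) = A`, then `grade_A(tr_A(I)) ≥ 2`. -/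
theorem grade_traceIdeal_ge_two (A : Type u) [CommRing A] [IsNoetherianRing A]
    (I : Ideal A) (hrefl : Module.IsReflexive A I)
    (hreg : ∃ a ∈ I, a ∈ nonZeroDivisors A)
    (hII : I.toFrac / I.toFrac = 1) :
    2 ≤ (traceIdeal A I).grade := by
  have hdual := one_div_traceIdeal_toFrac_le_one hreg hII
  obtain ⟨a, ha, ha'⟩ := hreg
  exact (traceIdeal A I).two_le_grade_of_one_div_toFrac_le_one (le_traceIdeal I ha) ha' hdual
end

section
/- Let A be a commutative Noetherian ring and let I be a reflexive ideal of A with grade_A(tr_A(I)) ≥ 2, where tr_A(I) is the trace ideal of I. Then I contains a nonzerodivisor of A and (I : I) = A. -/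
set_option maxHeartbeats 1000000
set_option synthInstance.maxHeartbeats 400000

open CategoryTheory

universe u

/-! A nonzerodivisor `r` of the trace ideal is killed by the annihilator of `I`, so `I` is
faithful and, by prime avoidance over associated primes, contains a nonzerodivisor `b`. Every
`f : I →ₗ[A] A` satisfies `f y * b = y * f b`, hence an `x ∈ (I : I)` multiplies each `f y` into
`A`, i.e. `(I : I) ⊆ (A : tr I)`. Finally, for a regular pair `r, s` in an ideal `J`, `x r = u` and
`x s = v` in `A` give `s u = r v`, so `r ∣ u` and `x ∈ A`: thus `(A : J) = A` once
`grade J ≥ 2`. -/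

open Pointwise nonZeroDivisors

section TraceIdeal

variable {A : Type*} [CommRing A] {M : Type*} [AddCommGroup M] [Module A M]

theorem traceIdeal_le_iff {J : Ideal A} :
    traceIdeal A M ≤ J ↔ ∀ (f : M →ₗ[A] A) (m : M), f m ∈ J := by
  rw [traceIdeal, iSup_le_iff]
  exact forall_congr' fun f =>
    ⟨fun h m => h (LinearMap.mem_range_self f m), by rintro h _ ⟨m, rfl⟩; exact h m⟩

theorem Module.annihilator_eq_bot_of_mem_traceIdeal {r : A} (hr : r ∈ traceIdeal A M)
    (hr0 : r ∈ A⁰) : Module.annihilator A M = ⊥ := by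
  refine eq_bot_iff.mpr fun z hz => ?_
  have hker : traceIdeal A M ≤ LinearMap.ker (LinearMap.mulLeft A z) :=
    traceIdeal_le_iff.mpr fun f m => by
      simp [← smul_eq_mul, ← map_smul, Module.mem_annihilator.mp hz]
  exact (mul_right_mem_nonZeroDivisors_eq_zero_iff hr0).mp (hker hr)

end TraceIdeal

theorem Ideal.exists_mem_nonZeroDivisors_isSMulRegular_of_two_le_grade {A : Type*} [CommRing A]
    {J : Ideal A} (h : 2 ≤ J.grade) :
    ∃ r ∈ J, ∃ s ∈ J, r ∈ A⁰ ∧ IsSMulRegular (QuotSMulTop r A) s := by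
  by_contra! hcon
  have hle : J.grade ≤ 1 := by
    refine sSup_le ?_
    rintro _ ⟨rs, rfl, hmem, hreg⟩
    match rs, hmem, hreg with
    | [], _, _ => simp
    | [_], _, _ => simp
    | r :: s :: rest, hmem, hreg =>
      simp only [RingTheory.Sequence.isWeaklyRegular_cons_iff] at hreg
      refine absurd hreg.2.1 (hcon r (hmem r (by simp)) s (hmem s (by simp)) ?_)
      exact isRegular_iff_mem_nonZeroDivisors.mp
        (isLeftRegular_iff_isRegular.mp (isLeftRegular_iff.mpr hreg.1))
  exact absurd (h.trans hle) (by norm_num)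

theorem dvd_of_mul_eq_mul_of_isSMulRegular_quotSMulTop {A : Type*} [CommRing A] {r s u v : A}
    (hs : IsSMulRegular (QuotSMulTop r A) s) (h : s * u = r * v) : r ∣ u := by
  have hu : u ∈ r • (⊤ : Submodule A A) :=
    mem_of_isSMulRegular_quotient_of_smul_mem hs <| by
      rw [smul_eq_mul, h]
      exact Submodule.smul_mem_pointwise_smul v r ⊤ Submodule.mem_top
  obtain ⟨w, -, rfl⟩ := (Submodule.mem_smul_pointwise_iff_exists u r ⊤).mp hu
  exact dvd_mul_right r w

theorem Ideal.apply_mul_eq_mul_apply {A : Type*} [CommRing A] {I : Ideal A} (f : I →ₗ[A] A)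
    (y b : I) : f y * b = y * f b := by
  rw [mul_comm, ← smul_eq_mul, ← map_smul, ← smul_eq_mul (a := (y : A)), ← map_smul]
  congr 1
  ext
  simp [mul_comm]

section FractionRing

variable {A : Type u} [CommRing A]

theorem Ideal.mem_one_div_toFrac_iff_s3 {J : Ideal A} {x : FractionRing A} :
    x ∈ 1 / J.toFrac ↔
      ∀ a ∈ J, x * algebraMap A (FractionRing A) a ∈ (1 : Submodule A (FractionRing A)) := by
  simp [Submodule.mem_div_iff_forall_mul_mem, Ideal.toFrac]

theorem Ideal.toFrac_le_one (J : Ideal A) : J.toFrac ≤ 1 := by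
  rw [Ideal.toFrac, Submodule.one_eq_range]
  exact LinearMap.map_le_range

theorem Ideal.one_div_toFrac_eq_one_of_two_le_grade {J : Ideal A} (h : 2 ≤ J.grade) :
    1 / J.toFrac = 1 := by
  refine le_antisymm (fun x hx => ?_) (Submodule.le_div_iff_mul_le.mpr ?_)
  · obtain ⟨r, hrJ, s, hsJ, hr, hs⟩ :=
      J.exists_mem_nonZeroDivisors_isSMulRegular_of_two_le_grade h
    rw [Ideal.mem_one_div_toFrac_iff_s3] at hx
    obtain ⟨u, hu⟩ := Submodule.mem_one.mp (hx r hrJ)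
    obtain ⟨v, hv⟩ := Submodule.mem_one.mp (hx s hsJ)
    have huv : s * u = r * v := IsFractionRing.injective A (FractionRing A) <| by
      simp only [map_mul, hu, hv]
      ring
    obtain ⟨w, rfl⟩ := dvd_of_mul_eq_mul_of_isSMulRegular_quotSMulTop hs huv
    refine Submodule.mem_one.mpr ⟨w, ?_⟩
    apply (IsLocalization.map_units (FractionRing A) ⟨r, hr⟩).mul_right_cancel
    rw [← map_mul, mul_comm, hu]
  · rw [one_mul]
    exact J.toFrac_le_one

theorem Ideal.toFrac_div_self_le_one_div_traceIdeal {I : Ideal A} {b : A} (hbI : b ∈ I)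
    (hb : b ∈ A⁰) : I.toFrac / I.toFrac ≤ 1 / (traceIdeal A I).toFrac := by
  intro x hx
  rw [Submodule.mem_div_iff_forall_mul_mem] at hx
  rw [Ideal.mem_one_div_toFrac_iff_s3]
  intro a ha
  refine (traceIdeal_le_iff (J := (1 : Submodule A (FractionRing A)).comap
    ((LinearMap.mulLeft A x).comp (Algebra.linearMap A (FractionRing A))))).mpr ?_ ha
  intro f y
  obtain ⟨j, hjI, hj⟩ := Submodule.mem_map.mp (hx _ (Submodule.mem_map_of_mem y.2))
  refine Submodule.mem_one.mpr ⟨f ⟨j, hjI⟩, ?_⟩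
  apply (IsLocalization.map_units (FractionRing A) ⟨b, hb⟩).mul_right_cancel
  let φ := algebraMap A (FractionRing A)
  change φ j = x * φ y at hj
  calc φ (f ⟨j, hjI⟩) * φ b = φ j * φ (f ⟨b, hbI⟩) := by
        rw [← map_mul, ← map_mul, Ideal.apply_mul_eq_mul_apply f _ ⟨b, hbI⟩]
    _ = x * φ (f y) * φ b := by
        rw [hj, mul_assoc, ← map_mul, mul_assoc, ← map_mul,
          Ideal.apply_mul_eq_mul_apply f y ⟨b, hbI⟩]

end FractionRing

theorem regular_and_colon_self_of_grade_traceIdeal_ge_two_general (A : Type u) [CommRing A]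
    [IsNoetherianRing A] (I : Ideal A)
    (hgrade : 2 ≤ (traceIdeal A I).grade) :
    (∃ a ∈ I, a ∈ nonZeroDivisors A) ∧ I.toFrac / I.toFrac = 1 := by
  obtain ⟨r, hr, -, -, hr0, -⟩ :=
    (traceIdeal A I).exists_mem_nonZeroDivisors_isSMulRegular_of_two_le_grade hgrade
  have : FaithfulSMul A I :=
    Module.annihilator_eq_bot.mp (Module.annihilator_eq_bot_of_mem_traceIdeal hr hr0)
  obtain ⟨b, hbI, hb⟩ := I.nonempty_inter_nonZeroDivisors_of_faithfulSMul
  refine ⟨⟨b, hbI, hb⟩, le_antisymm ?_ ?_⟩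
  · calc I.toFrac / I.toFrac ≤ 1 / (traceIdeal A I).toFrac :=
          I.toFrac_div_self_le_one_div_traceIdeal hbI hb
      _ = 1 := (traceIdeal A I).one_div_toFrac_eq_one_of_two_le_grade hgrade
  · rw [Submodule.le_div_iff_mul_le, one_mul]

/-- if `I` is a reflexive ideal of a commutative Noetherian ring `A` with
`grade_A(tr_A(I)) ≥ 2`, then `I` contains a nonzerodivisor and `(I : I) = A`. -/
theorem regular_and_colon_self_of_grade_traceIdeal_ge_two (A : Type u) [CommRing A]
    [IsNoetherianRing A] (I : Ideal A) (hrefl : Module.IsReflexive A I)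
    (hgrade : 2 ≤ (traceIdeal A I).grade) :
    (∃ a ∈ I, a ∈ nonZeroDivisors A) ∧ I.toFrac / I.toFrac = 1 :=
  regular_and_colon_self_of_grade_traceIdeal_ge_two_general A I hgrade
end

section
/- Let A be a commutative Noetherian ring and let I be an ideal of A such that the trace ideal tr_A(I) contains a nonzerodivisor of A. Then I contains a nonzerodivisor of A. -/
set_option maxHeartbeats 1000000
set_option synthInstance.maxHeartbeats 400000

open CategoryTheory

universe u

/-!
Any `r` annihilating `I` also annihilates every `f y` with `f : I →ₗ[A] A`, since
`r • f y = f (r • y) = 0`; hence `r` kills the trace ideal, and a nonzerodivisor in the trace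
forces `r = 0`. So `I` is a faithful `A`-module, and over a Noetherian ring an ideal avoiding
the nonzerodivisors lies in an associated prime `ann(x)`, `x ≠ 0`, so is not faithful.
-/

section TraceIdeal

variable {A : Type*} [CommRing A] {M : Type*} [AddCommGroup M] [Module A M]

theorem traceIdeal_le_annihilator_annihilator :
    traceIdeal A M ≤ (Module.annihilator A M).annihilator := by
  refine iSup_le fun f => ?_
  rintro _ ⟨m, rfl⟩
  rw [Submodule.mem_annihilator]
  intro r hr
  rw [smul_eq_mul, mul_comm, ← smul_eq_mul, ← map_smul, Module.mem_annihilator.mp hr m,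
    map_zero]

theorem faithfulSMul_of_mem_traceIdeal {a : A} (ha : a ∈ traceIdeal A M)
    (ha' : a ∈ nonZeroDivisors A) : FaithfulSMul A M := by
  refine Module.annihilator_eq_bot.mp (eq_bot_iff.mpr fun r hr => ?_)
  have har : a * r = 0 :=
    Submodule.mem_annihilator.mp (traceIdeal_le_annihilator_annihilator ha) r hr
  exact (mem_nonZeroDivisors_iff_left.mp ha' r har : r = 0)

end TraceIdeal

/-- if the trace ideal of an ideal `I` of a commutative Noetherian ring
contains a nonzerodivisor, then so does `I`. -/
theorem regular_of_traceIdeal_regular (A : Type u) [CommRing A] [IsNoetherianRing A]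
    (I : Ideal A) (h : ∃ a ∈ traceIdeal A I, a ∈ nonZeroDivisors A) :
    ∃ a ∈ I, a ∈ nonZeroDivisors A := by
  obtain ⟨a, ha, ha'⟩ := h
  have : FaithfulSMul A I := faithfulSMul_of_mem_traceIdeal ha ha'
  obtain ⟨b, hbI, hb⟩ := I.nonempty_inter_nonZeroDivisors_of_faithfulSMul
  exact ⟨b, hbI, hb⟩
end

section
/- Let A be a commutative Noetherian semi-local ring (finitely many maximal ideals) such that depth(A_m) ≤ 1 for every maximal ideal m of A. Let I be a reflexive ideal of A containing a nonzerodivisor of A such that (I : I) = A. Then I ≅ A as A-modules. -/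
set_option maxHeartbeats 1000000
set_option synthInstance.maxHeartbeats 400000

open CategoryTheory

universe u

/-!
Identify `I` with its image in `Q(A)` and put `J = (A : I)`, so that `IJ ⊆ A` and, by
reflexivity, `(A : J) = I`. If `IJ = A`, then `I` is an invertible fractional ideal of a
semilocal ring, hence principal, generated by a nonzerodivisor, hence free of rank one.
Otherwise `IJ ⊆ m` for some maximal ideal `m`, and `m` contains a nonzerodivisor `a` of `I`.
As `depth A_m ≤ 1`, every element of `m` is a zerodivisor on `A/aA`, so by prime avoidance `m`
is an associated prime of `A/aA`: some `y ∉ aA` has `my ⊆ aA`, and `y/a ∈ (A : m) \ A`.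
But `(A : m) · I · J ⊆ (A : m) · m ⊆ A` gives `(A : m) ⊆ (A : J) : I = (I : I) = A`.
-/

open RingTheory.Sequence

lemma Ideal.length_le_grade {A : Type*} [CommRing A] {J : Ideal A} {rs : List A}
    (hrs : IsWeaklyRegular A rs) (hJ : ∀ r ∈ rs, r ∈ J) : (rs.length : ℕ∞) ≤ J.grade :=
  le_sSup ⟨rs, rfl, hJ, hrs⟩

lemma not_isSMulRegular_quotSMulTop_of_grade_le_one {A : Type*} [CommRing A]
    {m : Ideal A} [m.IsPrime]
    (hgrade : (IsLocalRing.maximalIdeal (Localization.AtPrime m)).grade ≤ 1)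
    {a : A} (ha : a ∈ nonZeroDivisors A) (ham : a ∈ m) {b : A} (hbm : b ∈ m) :
    ¬ IsSMulRegular (QuotSMulTop a A) b := by
  intro hb
  have hab : IsWeaklyRegular A [a, b] := by
    refine (isWeaklyRegular_cons_iff A a [b]).mpr ⟨?_, (isWeaklyRegular_cons_iff _ b []).mpr
      ⟨hb, .nil A _⟩⟩
    exact isSMulRegular_iff_right_eq_zero_of_smul.mpr fun x hx =>
      (mem_nonZeroDivisors_iff_right.mp ha) x (by rwa [smul_eq_mul, mul_comm] at hx)
  have hmax : ∀ r ∈ [a, b].map (algebraMap A (Localization.AtPrime m)),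
      r ∈ IsLocalRing.maximalIdeal (Localization.AtPrime m) := by
    simp only [List.map_cons, List.map_nil, List.forall_mem_cons, List.not_mem_nil,
      IsEmpty.forall_iff, forall_const, and_true,
      IsLocalization.AtPrime.to_map_mem_maximal_iff (Localization.AtPrime m) m]
    exact ⟨ham, hbm⟩
  have := (Ideal.length_le_grade (hab.of_isLocalization _ m.primeCompl) hmax).trans hgrade
  norm_num at this

lemma mem_associatedPrimes_of_forall_not_isSMulRegular {A M : Type*} [CommRing A]
    [IsNoetherianRing A] [AddCommGroup M] [Module A M] [Module.Finite A M]
    {m : Ideal A} (hm : m.IsMaximal) (h : ∀ b ∈ m, ¬ IsSMulRegular M b) :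
    m ∈ associatedPrimes A M := by
  obtain ⟨p, hp, hmp⟩ := (Ideal.subset_union_prime_finite (associatedPrimes.finite A M)
    (f := id) 0 0 fun p hp _ _ => hp.1).mp <| by
      simp only [id, biUnion_associatedPrimes_eq_compl_regular]
      exact h
  exact hm.eq_of_le hp.1.ne_top hmp ▸ hp

lemma Ideal.one_div_toFrac_not_le_one_of_mem_associatedPrimes {A : Type u} [CommRing A]
    [IsNoetherianRing A] {m : Ideal A} (hm : m.IsMaximal) {a : A} (ha : a ∈ nonZeroDivisors A)
    (hass : m ∈ associatedPrimes A (QuotSMulTop a A)) :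
    ¬ (1 : Submodule A (FractionRing A)) / m.toFrac ≤ 1 := by
  obtain ⟨-, y₀, hy₀⟩ := isAssociatedPrime_iff.mp hass
  obtain ⟨y, rfl⟩ := Submodule.mkQ_surjective _ y₀
  have hann (c : A) : c ∈ m ↔ ∃ z, a * z = c * y := by
    rw [hy₀, Submodule.mem_colon_singleton, Submodule.mem_bot, Submodule.mkQ_apply,
      ← Submodule.Quotient.mk_smul, Submodule.Quotient.mk_eq_zero,
      Submodule.mem_smul_pointwise_iff_exists]
    simp
  let ι := algebraMap A (FractionRing A)
  let x := IsLocalization.mk' (FractionRing A) y (⟨a, ha⟩ : nonZeroDivisors A)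
  have hxa : x * ι a = ι y := IsLocalization.mk'_spec ..
  have hx : x ∈ (1 : Submodule A (FractionRing A)) / m.toFrac := by
    rintro _ ⟨c, hc, rfl⟩
    obtain ⟨z, hz⟩ := (hann c).mp hc
    refine Submodule.mem_one.mpr
      ⟨z, (IsLocalization.map_units (FractionRing A) ⟨a, ha⟩).mul_left_cancel ?_⟩
    calc ι a * ι z = ι y * ι c := by rw [← map_mul, ← map_mul, hz, mul_comm]
      _ = ι a * (x * ι c) := by rw [← hxa]; ring
  intro hle
  obtain ⟨w, hw⟩ := Submodule.mem_one.mp (hle hx)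
  refine hm.ne_top ((Ideal.eq_top_iff_one m).mpr ((hann 1).mpr ⟨w, ?_⟩))
  apply IsFractionRing.injective A (FractionRing A)
  rw [one_mul, ← hxa, ← hw, map_mul, mul_comm]

lemma Ideal.one_div_toFrac_not_le_one_of_grade_le_one {A : Type u} [CommRing A]
    [IsNoetherianRing A] {m : Ideal A} [hm : m.IsMaximal]
    (hgrade : (IsLocalRing.maximalIdeal (Localization.AtPrime m)).grade ≤ 1)
    {a : A} (ha : a ∈ nonZeroDivisors A) (ham : a ∈ m) :
    ¬ (1 : Submodule A (FractionRing A)) / m.toFrac ≤ 1 :=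
  Ideal.one_div_toFrac_not_le_one_of_mem_associatedPrimes hm ha <|
    mem_associatedPrimes_of_forall_not_isSMulRegular hm fun _ hb =>
      not_isSMulRegular_quotSMulTop_of_grade_le_one hgrade ha ham hb

lemma Submodule.one_div_le_div_self {R K : Type*} [CommSemiring R] [CommSemiring K]
    [Algebra R K] {I M : Submodule R K} (hI : 1 / (1 / I) = I) (hIM : I * (1 / I) ≤ M) :
    1 / M ≤ I / I := by
  rw [le_div_iff_mul_le]
  nth_rw 2 [← hI]
  rw [le_div_iff_mul_le, mul_assoc]
  calc 1 / M * (I * (1 / I)) ≤ 1 / M * M := mul_le_mul_right hIM _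
    _ ≤ 1 := by rw [mul_comm]; exact mul_one_div_le_one

lemma Ideal.exists_dual_mul_algebraMap_eq {A : Type u} [CommRing A] {I : Ideal A} {a : A}
    (haI : a ∈ I) (ha : a ∈ nonZeroDivisors A) :
    ∃ Z : Module.Dual A I →ₗ[A] FractionRing A,
      ∀ f (b : I), Z f * algebraMap A _ b = algebraMap A _ (f b) := by
  let t := IsLocalization.mk' (FractionRing A) (1 : A) (⟨a, ha⟩ : nonZeroDivisors A)
  refine ⟨LinearMap.mulRight A t ∘ₗ Algebra.linearMap A _ ∘ₗ Module.Dual.eval A I ⟨a, haI⟩,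
    fun f b => ?_⟩
  have hfb : b * f ⟨a, haI⟩ = a * f b := by
    simp only [← smul_eq_mul, ← map_smul]
    congr 1
    ext
    exact mul_comm _ _
  have hta : algebraMap A (FractionRing A) a * t = 1 := by
    rw [mul_comm, IsLocalization.mk'_spec, map_one]
  simp only [LinearMap.coe_comp, Function.comp_apply, Module.Dual.eval_apply,
    Algebra.linearMap_apply, LinearMap.mulRight_apply]
  calc _ = algebraMap A (FractionRing A) (b * f ⟨a, haI⟩) * t := by rw [map_mul]; ring
    _ = algebraMap A (FractionRing A) (f b) * (algebraMap A (FractionRing A) a * t) := by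
      rw [hfb, map_mul]; ring
    _ = _ := by rw [hta, mul_one]

lemma Ideal.one_div_one_div_toFrac {A : Type u} [CommRing A] {I : Ideal A}
    [Module.IsReflexive A I] {a : A} (haI : a ∈ I) (ha : a ∈ nonZeroDivisors A) :
    (1 : Submodule A (FractionRing A)) / (1 / I.toFrac) = I.toFrac := by
  refine le_antisymm (fun x hx => ?_)
    (Submodule.le_div_iff_mul_le.mpr Submodule.mul_one_div_le_one)
  obtain ⟨Z, hZ⟩ := Ideal.exists_dual_mul_algebraMap_eq haI ha
  have hZmem (f : Module.Dual A I) : Z f ∈ (1 : Submodule A (FractionRing A)) / I.toFrac := by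
    rintro _ ⟨b, hb, rfl⟩
    exact Submodule.mem_one.mpr ⟨f ⟨b, hb⟩, (hZ f ⟨b, hb⟩).symm⟩
  have hZsub : Z I.subtype = 1 :=
    (IsLocalization.map_units (FractionRing A) (⟨a, ha⟩ : nonZeroDivisors A)).mul_right_cancel
      ((hZ I.subtype ⟨a, haI⟩).trans (one_mul _).symm)
  let ι := Algebra.linearMap A (FractionRing A)
  let e := LinearEquiv.ofInjective ι (IsFractionRing.injective A (FractionRing A))
  have hxZ (f : Module.Dual A I) : (LinearMap.mulLeft A x ∘ₗ Z) f ∈ LinearMap.range ι :=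
    Submodule.one_eq_range (R := A) (A := FractionRing A) ▸ hx _ (hZmem f)
  obtain ⟨b, hb⟩ := (Module.bijective_dual_eval A I).2
    (e.symm.toLinearMap ∘ₗ (LinearMap.mulLeft A x ∘ₗ Z).codRestrict _ hxZ)
  have hbx : ι b = x := by
    have h := congr(ι $(LinearMap.congr_fun hb I.subtype))
    simp only [Module.Dual.eval_apply, LinearMap.coe_comp, Function.comp_apply,
      Submodule.subtype_apply] at h
    have he (y : LinearMap.range ι) : ι (e.symm y) = y :=
      (LinearEquiv.ofInjective_apply _ _).symm.trans congr(Subtype.val $(e.apply_symm_apply y))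
    rw [h, LinearEquiv.coe_coe, he]
    simp [hZsub]
  exact hbx ▸ ⟨b, b.2, rfl⟩

lemma Ideal.toFrac_le_one_s5 {A : Type u} [CommRing A] (I : Ideal A) :
    I.toFrac ≤ 1 :=
  Submodule.one_eq_range (R := A) (A := FractionRing A) ▸ LinearMap.map_le_range

lemma Ideal.isFractional_one_div_toFrac {A : Type u} [CommRing A] {I : Ideal A} {a : A}
    (haI : a ∈ I) (ha : a ∈ nonZeroDivisors A) :
    IsFractional (nonZeroDivisors A) ((1 : Submodule A (FractionRing A)) / I.toFrac) :=
  ⟨a, ha, fun z hz => by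
    rw [Algebra.smul_def, mul_comm]
    exact Submodule.mem_one.mp (hz _ ⟨a, haI, rfl⟩)⟩

lemma Ideal.isPrincipal_toFrac_of_mul_one_div_eq_one {A : Type u} [CommRing A]
    (hsemi : {m : Ideal A | m.IsMaximal}.Finite) {I : Ideal A} {a : A}
    (haI : a ∈ I) (ha : a ∈ nonZeroDivisors A)
    (hinv : I.toFrac * ((1 : Submodule A (FractionRing A)) / I.toFrac) = 1) :
    I.toFrac.IsPrincipal := by
  let J : FractionalIdeal (nonZeroDivisors A) (FractionRing A) :=
    ⟨_, Ideal.isFractional_one_div_toFrac haI ha⟩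
  refine FractionalIdeal.isPrincipal.of_finite_maximals_of_inv le_rfl hsemi I J ?_
  rwa [← FractionalIdeal.coeToSubmodule_inj, FractionalIdeal.coe_mul, FractionalIdeal.coe_mk,
    FractionalIdeal.coe_coeIdeal, FractionalIdeal.coe_one]

lemma Ideal.nonempty_linearEquiv_of_isPrincipal_toFrac {A : Type u} [CommRing A] {I : Ideal A}
    {a : A} (haI : a ∈ I) (ha : a ∈ nonZeroDivisors A) (hI : I.toFrac.IsPrincipal) :
    Nonempty (I ≃ₗ[A] A) := by
  obtain ⟨v, hv⟩ := hI
  have hav : algebraMap A (FractionRing A) a ∈ A ∙ v := hv ▸ ⟨a, haI, rfl⟩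
  obtain ⟨s, hs⟩ := Submodule.mem_span_singleton.mp hav
  have hinj : Function.Injective (LinearMap.toSpanSingleton A (FractionRing A) v) := by
    refine (injective_iff_map_eq_zero _).mpr fun r hr => ?_
    refine (mem_nonZeroDivisors_iff_right.mp ha) r (IsFractionRing.injective A (FractionRing A) ?_)
    rw [LinearMap.toSpanSingleton_apply] at hr
    rw [map_mul, map_zero, ← Algebra.smul_def, ← hs, smul_comm, hr, smul_zero]
  exact ⟨(Submodule.equivMapOfInjective _ (IsFractionRing.injective A (FractionRing A)) I).trans
    ((LinearEquiv.ofEq _ _ (hv.trans (LinearMap.span_singleton_eq_range A _ v))).trans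
      (LinearEquiv.ofInjective _ hinj).symm)⟩

/-- over a commutative Noetherian semi-local ring `A` with
`depth(A_m) ≤ 1` for all maximal ideals `m`, any reflexive ideal `I` containing a
nonzerodivisor with `(I : I) = A` is free: `I ≅ A`. -/
theorem reflexive_regular_colon_self_isoSelf (A : Type u) [CommRing A] [IsNoetherianRing A]
    (hsemi : {m : Ideal A | m.IsMaximal}.Finite)
    (hdepth : ∀ (m : Ideal A) [m.IsMaximal],
      (IsLocalRing.maximalIdeal (Localization.AtPrime m)).grade ≤ 1)
    (I : Ideal A) (hrefl : Module.IsReflexive A I)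
    (hreg : ∃ a ∈ I, a ∈ nonZeroDivisors A)
    (hII : I.toFrac / I.toFrac = 1) :
    Nonempty (↥I ≃ₗ[A] A) := by
  obtain ⟨a, haI, ha⟩ := hreg
  let ι := Algebra.linearMap A (FractionRing A)
  let P := I.toFrac * ((1 : Submodule A (FractionRing A)) / I.toFrac)
  have hP : (P.comap ι).map ι = P :=
    Submodule.map_comap_eq_self (Submodule.one_eq_range (R := A) (A := FractionRing A) ▸
      Submodule.mul_one_div_le_one)
  by_cases hinv : P.comap ι = ⊤
  · refine I.nonempty_linearEquiv_of_isPrincipal_toFrac haI ha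
      (I.isPrincipal_toFrac_of_mul_one_div_eq_one hsemi haI ha ?_)
    change P = 1
    rw [← hP, hinv, Submodule.map_top, ← Submodule.one_eq_range]
  · obtain ⟨m, hm, hPm⟩ := Ideal.exists_le_maximal _ hinv
    have haP : a ∈ P.comap ι := by
      have haI' : ι a ∈ I.toFrac := ⟨a, haI, rfl⟩
      simpa using Submodule.mul_mem_mul haI' (Submodule.one_mem_div.mpr I.toFrac_le_one_s5)
    have hPm' : P ≤ m.toFrac := hP ▸ Submodule.map_mono hPm
    exact Ideal.one_div_toFrac_not_le_one_of_grade_le_one (hdepth m) ha (hPm haP)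
      ((Submodule.one_div_le_div_self (I.one_div_one_div_toFrac haI ha) hPm').trans hII.le)
      |>.elim
end

section
/- Let R be a commutative ring and let I be an ideal of R such that R is isomorphic to a direct summand of I as an R-module. Then I ≅ R as R-modules. -/
set_option maxHeartbeats 1000000
set_option synthInstance.maxHeartbeats 400000

open CategoryTheory

universe u

/-- an ideal of a commutative ring having the ring as a direct summand is
isomorphic to the ring. -/
theorem ideal_iso_of_ring_summand (R : Type u) [CommRing R] (I : Ideal R)
    (h : ∃ (N : Type u) (_ : AddCommGroup N) (_ : Module R N),
      Nonempty (↥I ≃ₗ[R] (R × N))) :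
    Nonempty (↥I ≃ₗ[R] R) := by
  obtain ⟨N, _, _, ⟨e⟩⟩ := h
  set π : ↥I →ₗ[R] R := (LinearMap.fst R R N).comp e.toLinearMap with hπ
  set x : ↥I := e.symm (1, 0) with hx
  have hπx : π x = 1 := by simp [hπ, hx]
  have key : ∀ n : N, n = 0 := by
    intro n
    set m : ↥I := e.symm (0, n) with hm
    have hπm : π m = 0 := by simp [hπ, hm]
    have hcomm : (↑m : R) • x = (↑x : R) • m := by
      apply Subtype.ext
      simp [mul_comm]
    have h1 : π ((↑m : R) • x) = (↑m : R) := by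
      rw [map_smul, hπx, smul_eq_mul, mul_one]
    have h2 : π ((↑x : R) • m) = 0 := by
      rw [map_smul, hπm, smul_eq_mul, mul_zero]
    have hm0 : (↑m : R) = 0 := by rw [← h1, hcomm, h2]
    have : m = 0 := Subtype.ext hm0
    have := congrArg e this
    rw [hm, e.apply_symm_apply, map_zero] at this
    exact (Prod.mk.injEq _ _ _ _ ▸ this).2
  let f : (R × N) ≃ₗ[R] R :=
    { toFun := Prod.fst
      map_add' := fun _ _ => rfl
      map_smul' := fun _ _ => rfl
      invFun := fun r => (r, 0)
      left_inv := fun p => by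
        ext
        · rfl
        · exact (key p.2).symm
      right_inv := fun r => rfl }
  exact ⟨e.trans f⟩
end

section
/- Let R be a generically Gorenstein 1-dimensional Cohen–Macaulay Noetherian ring and let R ⊆ S ⊆ Q(R) be a module finite birational extension. Then S is a reflexive R-module if and only if every finitely generated reflexive S-module is reflexive as an R-module. -/
set_option maxHeartbeats 1000000
set_option synthInstance.maxHeartbeats 400000

open CategoryTheory

universe u

/-! An element `Λ` of the `R`-bidual of an `S`-module `M` induces, through the `R`-reflexivity
of `S`, an `S`-linear functional `g ↦ Λ (· ∘ g)` on `Hom_S(M, S)`, hence by `S`-reflexivity of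
`M` an element `m`, and `Λ` agrees with evaluation at `m` on every functional `h ∘ g` with
`g : M → S` `S`-linear and `h : S → R` `R`-linear. For a birational `S`, every `R`-linear
`f : M → R` is `S`-linear as a map to `S`, and a nonzerodivisor `r` of the conductor turns
`r • f` into such a composite; cancelling `r` gives `Λ f = f m`. -/

open Module nonZeroDivisors

section Tower

variable {R S M : Type*} [CommRing R] [CommRing S] [Algebra R S]
  [AddCommGroup M] [Module R M] [Module S M] [IsScalarTower R S M]

theorem injective_dual_eval_of_isScalarTower (hS : Function.Injective (Dual.eval R S))
    (hM : Function.Injective (Dual.eval S M)) : Function.Injective (Dual.eval R M) := by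
  refine (injective_iff_map_eq_zero _).2 fun m hm => hM ?_
  ext g
  refine hS (LinearMap.ext fun h => ?_)
  simpa using LinearMap.congr_fun hm (h ∘ₗ g.restrictScalars R)

theorem exists_apply_comp_eq_apply [IsReflexive R S] [IsReflexive S M]
    (Λ : Dual R (Dual R M)) :
    ∃ m : M, ∀ (g : Dual S M) (h : Dual R S), Λ (h ∘ₗ g.restrictScalars R) = h (g m) := by
  let Φ : Dual S M → S := fun g => (evalEquiv R S).symm ((g.restrictScalars R).dualMap.dualMap Λ)
  have hΦ (g : Dual S M) (h : Dual R S) : h (Φ g) = Λ (h ∘ₗ g.restrictScalars R) :=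
    apply_evalEquiv_symm_apply R S h _
  have ext_S {s s' : S} (hss : ∀ h : Dual R S, h s = h s') : s = s' :=
    (evalEquiv R S).injective (LinearMap.ext hss)
  let Φₗ : Dual S (Dual S M) :=
    { toFun := Φ
      map_add' := fun g₁ g₂ => ext_S fun h => by
        rw [map_add, hΦ, hΦ, hΦ, ← map_add Λ, LinearMap.restrictScalars_add,
          LinearMap.comp_add]
      map_smul' := fun t g => ext_S fun h => by
        have hmul : h (t • Φ g) = (h ∘ₗ LinearMap.mulLeft R t) (Φ g) := rfl
        rw [hΦ, RingHom.id_apply, hmul, hΦ]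
        rfl }
  refine ⟨(evalEquiv S M).symm Φₗ, fun g h => ?_⟩
  rw [apply_evalEquiv_symm_apply]
  exact (hΦ g h).symm

theorem eq_zero_of_forall_apply_comp_eq_zero {h₀ : Dual R S} (h₀_one : h₀ 1 ∈ R⁰)
    (hlift : ∀ f : Dual R M, ∃ g : Dual S M, ∀ m, g m = algebraMap R S (f m))
    {Λ : Dual R (Dual R M)} (hΛ : ∀ (g : Dual S M) (h : Dual R S),
      Λ (h ∘ₗ g.restrictScalars R) = 0) : Λ = 0 := by
  ext f
  obtain ⟨g, hg⟩ := hlift f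
  have hcomp : h₀ ∘ₗ g.restrictScalars R = h₀ 1 • f := by
    ext m
    simp [hg, Algebra.algebraMap_eq_smul_one, mul_comm]
  have hΛf : h₀ 1 * Λ f = 0 := by
    rw [← smul_eq_mul, ← map_smul, ← hcomp, hΛ]
  exact (mul_left_mem_nonZeroDivisors_eq_zero_iff h₀_one).1 hΛf

theorem isReflexive_of_isScalarTower [IsReflexive R S] [IsReflexive S M] {h₀ : Dual R S}
    (h₀_one : h₀ 1 ∈ R⁰)
    (hlift : ∀ f : Dual R M, ∃ g : Dual S M, ∀ m, g m = algebraMap R S (f m)) :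
    IsReflexive R M where
  bijective_dual_eval' := by
    refine ⟨injective_dual_eval_of_isScalarTower (bijective_dual_eval R S).1
      (bijective_dual_eval S M).1, fun Λ => ?_⟩
    obtain ⟨m, hm⟩ := exists_apply_comp_eq_apply (S := S) Λ
    refine ⟨m, sub_eq_zero.1 (eq_zero_of_forall_apply_comp_eq_zero h₀_one hlift fun g h => ?_)⟩
    simp [hm]

end Tower

section Birational

variable {R : Type*} [CommRing R] {S : Subalgebra R (FractionRing R)}

theorem Subalgebra.isTorsionFreeModule_fractionRing : IsTorsionFreeModule R S := by
  intro u hu s hs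
  have hunit := IsLocalization.map_units (FractionRing R) (⟨u, hu⟩ : R⁰)
  rw [Subtype.ext_iff, Subalgebra.coe_smul, Algebra.smul_def] at hs
  exact Subtype.ext (hunit.mul_right_eq_zero.1 hs)

variable {M N : Type*} [AddCommGroup M] [Module R M] [Module S M] [IsScalarTower R S M]
  [AddCommGroup N] [Module R N] [Module S N] [IsScalarTower R S N]

/-- For `t = a / u`, the difference `f (t • m) - t • f m` is killed by `u`, since `u • t = a`. -/
def LinearMap.extendScalarsOfBirational (hN : IsTorsionFreeModule R N) (f : M →ₗ[R] N) :
    M →ₗ[S] N where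
  toFun := f
  map_add' := f.map_add
  map_smul' t m := by
    obtain ⟨⟨a, u⟩, hau⟩ := IsLocalization.surj R⁰ (t : FractionRing R)
    have hut : (u : R) • t = algebraMap R S a := by
      ext
      rw [Subalgebra.coe_smul, Algebra.smul_def, mul_comm]
      exact hau
    refine sub_eq_zero.1 (hN u u.2 _ ?_)
    rw [smul_sub, ← map_smul, ← smul_assoc, hut, RingHom.id_apply, ← smul_assoc, hut,
      algebraMap_smul, algebraMap_smul, map_smul, sub_self]

/-- Via `h ↦ h 1`, this says the conductor `(R : S)` contains a nonzerodivisor. -/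
theorem exists_dual_apply_one_mem_nonZeroDivisors (hfin : Module.Finite R S) :
    ∃ h : Dual R S, h 1 ∈ R⁰ := by
  have hfg : (Subalgebra.toSubmodule S).FG := by
    rw [← Submodule.fg_top, ← Module.finite_def]
    exact hfin
  obtain ⟨r, hr, hint⟩ := FractionalIdeal.isFractional_of_fg (S := R⁰) hfg
  have hinj := IsFractionRing.injective R (FractionRing R)
  let toR := (LinearEquiv.ofInjective (Algebra.linearMap R (FractionRing R)) hinj).symm
  let h : Dual R S := toR.toLinearMap ∘ₗ (r • S.val.toLinearMap).codRestrict
    (LinearMap.range (Algebra.linearMap R (FractionRing R))) fun s => by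
      obtain ⟨a, ha⟩ := hint s s.2
      exact ⟨a, ha⟩
  refine ⟨h, ?_⟩
  convert hr
  apply hinj
  have hval : algebraMap R (FractionRing R) (h 1) = (r • 1 : FractionRing R) :=
    congrArg Subtype.val (toR.symm.apply_symm_apply _)
  rw [hval, Algebra.smul_def, mul_one]

theorem isReflexive_of_birational [IsReflexive R S] [IsReflexive S M]
    (hfin : Module.Finite R S) : IsReflexive R M := by
  obtain ⟨h₀, h₀_one⟩ := exists_dual_apply_one_mem_nonZeroDivisors hfin
  exact isReflexive_of_isScalarTower h₀_one fun f =>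
    ⟨(Algebra.linearMap R S ∘ₗ f).extendScalarsOfBirational
      Subalgebra.isTorsionFreeModule_fractionRing, fun _ => rfl⟩

end Birational

theorem reflexive_iff_refl_descends_general (R : Type u) [CommRing R]
    (S : Subalgebra R (FractionRing R)) (hfin : Module.Finite R S) :
    Module.IsReflexive R S ↔
      ∀ (M : Type u) [AddCommGroup M] [Module R M] [Module S M] [IsScalarTower R S M],
        Module.Finite S M → Module.IsReflexive S M → Module.IsReflexive R M :=
  ⟨fun _ _ _ _ _ _ _ _ => isReflexive_of_birational hfin,
    fun H => H S (Module.Finite.self S) inferInstance⟩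

/-- `S` is a reflexive `R`-module iff every finitely generated reflexive
`S`-module is reflexive as an `R`-module. -/
theorem reflexive_iff_refl_descends (R : Type u) [CommRing R]
    (hCM : IsCohenMacaulayRing R) (hdim : ringKrullDim R = 1)
    (hGG : IsGenericallyGorenstein R)
    (S : Subalgebra R (FractionRing R)) (hfin : Module.Finite R S) :
    Module.IsReflexive R S ↔
      ∀ (M : Type u) [AddCommGroup M] [Module R M] [Module S M] [IsScalarTower R S M],
        Module.Finite S M → Module.IsReflexive S M → Module.IsReflexive R M :=
  reflexive_iff_refl_descends_general R S hfin
end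

section
/- Let R be a generically Gorenstein 1-dimensional Cohen–Macaulay Noetherian ring and let R ⊆ S ⊆ Q(R) be a module finite birational extension such that S is a reflexive R-module. Then every finitely generated R-module M that fits in an exact sequence 0 → M → S^a → N → 0 of S-modules with N a torsion-free (equivalently, maximal Cohen–Macaulay) S-module also fits in an exact sequence 0 → M → R^c → Y → 0 of R-modules with Y a torsion-free (equivalently, maximal Cohen–Macaulay) R-module; that is, Ω CM(S) ⊆ Ω CM(R). -/
set_option maxHeartbeats 1000000
set_option synthInstance.maxHeartbeats 400000

open CategoryTheory

universe u

/-!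
A reflexive module `P` whose dual is finitely generated embeds into a free module with
torsion-free cokernel: dualizing a surjection `Rⁿ → P^*` identifies `P = P^{**}` with the
annihilator in `(Rⁿ)^* = Rⁿ` of the kernel, and annihilators are saturated (the quotient by
them is torsion-free, as `R` is). This applies to `S^a`, which is reflexive since `S` is, and
has finitely generated dual since `R` is Noetherian. The embedding `M ⊆ S^a` has cokernel
torsion-free over `S`, hence over `R`, because nonzerodivisors of `R` stay nonzerodivisors in
`S ⊆ Q(R)`. Saturated embeddings compose, so `M ⊆ S^a ⊆ R^c` is the required embedding.
-/

open Function LinearMap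

namespace Submodule

variable {R P Q : Type*} [CommRing R] [AddCommGroup P] [Module R P] [AddCommGroup Q] [Module R Q]

def IsSaturated (p : Submodule R P) : Prop :=
  ∀ r ∈ nonZeroDivisors R, ∀ x : P, r • x ∈ p → x ∈ p

theorem isTorsionFreeModule_quotient_iff (p : Submodule R P) :
    IsTorsionFreeModule R (P ⧸ p) ↔ p.IsSaturated := by
  refine ⟨fun h r hr x hx ↦ ?_, fun h r hr y hy ↦ ?_⟩
  · exact (Quotient.mk_eq_zero p).mp (h r hr _ ((Quotient.mk_eq_zero p).mpr hx))
  · obtain ⟨x, rfl⟩ := p.mkQ_surjective y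
    exact (Quotient.mk_eq_zero p).mpr (h r hr x ((Quotient.mk_eq_zero p).mp hy))

theorem isSaturated_top : (⊤ : Submodule R P).IsSaturated :=
  fun _ _ _ _ ↦ mem_top

theorem IsSaturated.map {p : Submodule R P} (hp : p.IsSaturated) {G : P →ₗ[R] Q}
    (hG : Injective G) (hGsat : (range G).IsSaturated) : (p.map G).IsSaturated := by
  rintro r hr x ⟨y, hy, hyx⟩
  obtain ⟨z, rfl⟩ := hGsat r hr x ⟨y, hyx⟩
  rw [← map_smul] at hyx
  exact ⟨z, hp r hr z (hG hyx ▸ hy), rfl⟩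

theorem IsSaturated.restrictScalars {S : Type*} [CommRing S] [Algebra R S] [Module S P]
    [IsScalarTower R S P]
    (hRS : ∀ r ∈ nonZeroDivisors R, algebraMap R S r ∈ nonZeroDivisors S)
    {p : Submodule S P} (hp : p.IsSaturated) : (p.restrictScalars R).IsSaturated := by
  intro r hr x hx
  rw [← algebraMap_smul S r x] at hx
  exact hp _ (hRS r hr) x hx

theorem isSaturated_dualAnnihilator (W : Submodule R P) : W.dualAnnihilator.IsSaturated := by
  intro r hr ℓ hℓ
  rw [mem_dualAnnihilator] at hℓ ⊢
  intro w hw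
  exact (mem_nonZeroDivisors_iff_right.mp hr) _ (by simpa [mul_comm] using hℓ w hw)

end Submodule

theorem LinearMap.isSaturated_ker {R P Q : Type*} [CommRing R] [AddCommGroup P] [Module R P]
    [AddCommGroup Q] [Module R Q] (g : P →ₗ[R] Q) (hQ : IsTorsionFreeModule R Q) :
    (ker g).IsSaturated := by
  intro r hr x hx
  rw [mem_ker, map_smul] at hx
  exact hQ r hr _ hx

theorem Subalgebra.algebraMap_mem_nonZeroDivisors {R K : Type*} [CommRing R] [CommRing K]
    [Algebra R K] [IsFractionRing R K] (S : Subalgebra R K) {r : R}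
    (hr : r ∈ nonZeroDivisors R) : algebraMap R S r ∈ nonZeroDivisors S :=
  mem_nonZeroDivisors_of_injective (f := S.val) Subtype.val_injective
    (IsLocalization.map_units K ⟨r, hr⟩).mem_nonZeroDivisors

namespace Module

theorem IsReflexive.fin_pi {R P : Type*} [CommSemiring R] [AddCommMonoid P] [Module R P]
    [IsReflexive R P] : ∀ a : ℕ, IsReflexive R (Fin a → P)
  | 0 => ⟨⟨fun _ _ _ ↦ Subsingleton.elim _ _, fun _ ↦ ⟨0, Subsingleton.elim _ _⟩⟩⟩
  | a + 1 =>
    have := fin_pi (R := R) (P := P) a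
    Module.equiv (Fin.consLinearEquiv R fun _ : Fin (a + 1) ↦ P)

variable {R P : Type*} [CommRing R] [AddCommGroup P] [Module R P]

theorem IsReflexive.exists_injective_isSaturated_range [IsReflexive R P]
    [Module.Finite R (Dual R P)] :
    ∃ (n : ℕ) (F : P →ₗ[R] Fin n → R),
      Function.Injective F ∧ (range F).IsSaturated := by
  obtain ⟨n, π, hπ⟩ := Module.Finite.exists_fin' R (Dual R P)
  let e := LinearEquiv.piRing R R (Fin n) R
  refine ⟨n, e.toLinearMap ∘ₗ π.dualMap ∘ₗ Dual.eval R P, ?_, ?_⟩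
  · exact e.injective.comp
      ((dualMap_injective_of_surjective hπ).comp (bijective_dual_eval R P).injective)
  · rw [range_comp, range_comp, range_eq_top.mpr (bijective_dual_eval R P).surjective,
      Submodule.map_top, range_dualMap_eq_dualAnnihilator_ker_of_surjective π hπ]
    exact (Submodule.isSaturated_dualAnnihilator _).map e.injective
      (e.range ▸ Submodule.isSaturated_top)

end Module

theorem syzygyCM_subset_of_reflexive_general (R : Type u) [CommRing R]
    (hCM : IsCohenMacaulayRing R)
    (S : Subalgebra R (FractionRing R)) (hfin : Module.Finite R S)
    (hrefl : Module.IsReflexive R S)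
    (M : Type u) [AddCommGroup M] [Module R M] [Module S M] [IsScalarTower R S M]
    (a : ℕ) (N : Type u) [AddCommGroup N] [Module S N]
    (hNtf : IsTorsionFreeModule S N)
    (f : M →ₗ[S] (Fin a → S)) (g : (Fin a → S) →ₗ[S] N)
    (hf : Function.Injective f)
    (hfg : LinearMap.range f = LinearMap.ker g) :
    ∃ (c : ℕ) (Y : Type u) (_ : AddCommGroup Y) (_ : Module R Y),
      Module.Finite R Y ∧ IsTorsionFreeModule R Y ∧
      ∃ (f' : M →ₗ[R] (Fin c → R)) (g' : (Fin c → R) →ₗ[R] Y),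
        Function.Injective f' ∧ Function.Surjective g' ∧
          LinearMap.range f' = LinearMap.ker g' := by
  have : IsNoetherianRing R := hCM.1
  have := Module.IsReflexive.fin_pi (R := R) (P := S) a
  obtain ⟨c, F, hF, hFsat⟩ :=
    Module.IsReflexive.exists_injective_isSaturated_range (R := R) (P := Fin a → S)
  have hfsat : (range (f.restrictScalars R)).IsSaturated := by
    rw [range_restrictScalars, hfg]
    exact (g.isSaturated_ker hNtf).restrictScalars fun _ ↦ S.algebraMap_mem_nonZeroDivisors
  let f' := F ∘ₗ f.restrictScalars R
  refine ⟨c, _ ⧸ range f', inferInstance, inferInstance, inferInstance, ?_, f', (range f').mkQ,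
    hF.comp hf, (range f').mkQ_surjective, (Submodule.ker_mkQ _).symm⟩
  rw [Submodule.isTorsionFreeModule_quotient_iff, range_comp]
  exact hfsat.map hF hFsat

/-- if `S` is a reflexive `R`-module, then `Ω CM(S) ⊆ Ω CM(R)`:
any finitely generated `R`-module `M` sitting in an exact sequence
`0 → M → S^a → N → 0` of `S`-modules with `N` torsion-free over `S` also sits in an
exact sequence `0 → M → R^c → Y → 0` of `R`-modules with `Y` torsion-free over `R`. -/
theorem syzygyCM_subset_of_reflexive (R : Type u) [CommRing R]
    (hCM : IsCohenMacaulayRing R) (hdim : ringKrullDim R = 1)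
    (hGG : IsGenericallyGorenstein R)
    (S : Subalgebra R (FractionRing R)) (hfin : Module.Finite R S)
    (hrefl : Module.IsReflexive R S)
    (M : Type u) [AddCommGroup M] [Module R M] [Module S M] [IsScalarTower R S M]
    (hMfin : Module.Finite R M)
    (a : ℕ) (N : Type u) [AddCommGroup N] [Module S N]
    (hNfin : Module.Finite S N) (hNtf : IsTorsionFreeModule S N)
    (f : M →ₗ[S] (Fin a → S)) (g : (Fin a → S) →ₗ[S] N)
    (hf : Function.Injective f) (hg : Function.Surjective g)
    (hfg : LinearMap.range f = LinearMap.ker g) :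
    ∃ (c : ℕ) (Y : Type u) (_ : AddCommGroup Y) (_ : Module R Y),
      Module.Finite R Y ∧ IsTorsionFreeModule R Y ∧
      ∃ (f' : M →ₗ[R] (Fin c → R)) (g' : (Fin c → R) →ₗ[R] Y),
        Function.Injective f' ∧ Function.Surjective g' ∧
          LinearMap.range f' = LinearMap.ker g' :=
  syzygyCM_subset_of_reflexive_general R hCM S hfin hrefl M a N hNtf f g hf hfg
end

section
/- Let R be a generically Gorenstein local Cohen–Macaulay Noetherian ring of dimension 1 and let R ⊆ S ⊆ Q(R) be a module finite birational extension such that S ≅ Hom_R(S, R) as R-modules. Then S is a reflexive R-module and the conductor c_R(S) = (R : S) is a stable ideal, i.e. c_R(S) ≅ Hom_R(c_R(S), c_R(S)) as R-modules. -/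
set_option maxHeartbeats 1000000
set_option synthInstance.maxHeartbeats 400000

open CategoryTheory

universe u

namespace ConductorAux

variable {R : Type u} [CommRing R]

noncomputable def equivOne : R ≃ₗ[R] ↥(1 : Submodule R (FractionRing R)) :=
  (LinearEquiv.ofInjective (Algebra.linearMap R (FractionRing R))
    (IsFractionRing.injective R (FractionRing R))).trans
    (LinearEquiv.ofEq _ _ Submodule.one_eq_range.symm)

@[simp] lemma equivOne_apply (r : R) :
    ((equivOne r : ↥(1 : Submodule R (FractionRing R))) : FractionRing R)
      = algebraMap R (FractionRing R) r := rfl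

lemma exists_mul_of_linearMap (M N : Submodule R (FractionRing R)) {u : R}
    (hu : u ∈ nonZeroDivisors R) (hmem : algebraMap R (FractionRing R) u ∈ M)
    (f : ↥M →ₗ[R] ↥N) :
    ∃ x ∈ N / M, ∀ (m : FractionRing R) (hm : m ∈ M),
      (f ⟨m, hm⟩ : FractionRing R) = x * m := by
  have huu : IsUnit (algebraMap R (FractionRing R) u) :=
    IsLocalization.map_units (FractionRing R) ⟨u, hu⟩
  obtain ⟨v, hv⟩ := huu.exists_right_inv
  set x : FractionRing R := (f ⟨_, hmem⟩ : FractionRing R) * v with hxdef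
  have key : ∀ (m : FractionRing R) (hm : m ∈ M),
      (f ⟨m, hm⟩ : FractionRing R) = x * m := by
    intro m hm
    obtain ⟨⟨a, s⟩, hs⟩ := IsLocalization.surj (nonZeroDivisors R) m
    have hsu : IsUnit (algebraMap R (FractionRing R) (s : R)) :=
      IsLocalization.map_units (FractionRing R) s
    have h1 : (s : R) • (u • (⟨m, hm⟩ : ↥M))
        = a • (⟨algebraMap R (FractionRing R) u, hmem⟩ : ↥M) := by
      apply Subtype.ext
      show (s : R) • (u • m) = a • (algebraMap R (FractionRing R) u)
      rw [Algebra.smul_def, Algebra.smul_def, Algebra.smul_def, ← hs]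
      ring
    have h2 := congrArg (fun z : ↥M => ((f z : ↥N) : FractionRing R)) h1
    simp only [map_smul] at h2
    have h2' : algebraMap R (FractionRing R) (s : R) *
        (algebraMap R (FractionRing R) u * (f ⟨m, hm⟩ : FractionRing R))
        = algebraMap R (FractionRing R) a * (f ⟨_, hmem⟩ : FractionRing R) := by
      simpa [Algebra.smul_def, mul_assoc] using h2
    apply (hsu.mul huu).mul_left_cancel
    rw [mul_assoc, h2', hxdef, ← hs]
    linear_combination (-(algebraMap R (FractionRing R) (s : R) * m *
      (f ⟨_, hmem⟩ : FractionRing R))) * hv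
  exact ⟨x, Submodule.mem_div_iff_forall_mul_mem.mpr
    (fun y hy => key y hy ▸ (f ⟨y, hy⟩).2), key⟩

noncomputable def mulMap (M N : Submodule R (FractionRing R)) :
    ↥(N / M) →ₗ[R] (↥M →ₗ[R] ↥N) where
  toFun x :=
    { toFun := fun m => ⟨(x : FractionRing R) * m,
        Submodule.mem_div_iff_forall_mul_mem.mp x.2 m m.2⟩
      map_add' := fun a b => Subtype.ext (by push_cast; ring)
      map_smul' := fun r a => Subtype.ext
        (by push_cast [Algebra.smul_def, RingHom.id_apply]; ring) }
  map_add' x y := LinearMap.ext fun m => Subtype.ext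
    (by simp only [LinearMap.add_apply, Submodule.coe_add, LinearMap.coe_mk, AddHom.coe_mk]; push_cast; ring)
  map_smul' r x := LinearMap.ext fun m => Subtype.ext
    (by simp only [LinearMap.smul_apply, Submodule.coe_smul, RingHom.id_apply, LinearMap.coe_mk, AddHom.coe_mk]
        push_cast [Algebra.smul_def]; ring)

@[simp] lemma mulMap_apply (M N : Submodule R (FractionRing R)) (x : ↥(N / M)) (m : ↥M) :
    ((mulMap M N x m : ↥N) : FractionRing R) = (x : FractionRing R) * m := rfl

noncomputable def divHomEquiv (M N : Submodule R (FractionRing R)) {u : R}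
    (hu : u ∈ nonZeroDivisors R) (hmem : algebraMap R (FractionRing R) u ∈ M) :
    ↥(N / M) ≃ₗ[R] (↥M →ₗ[R] ↥N) :=
  LinearEquiv.ofBijective (mulMap M N)
    ⟨by
      intro x y h
      have huu : IsUnit (algebraMap R (FractionRing R) u) :=
        IsLocalization.map_units (FractionRing R) ⟨u, hu⟩
      have h2 : (x : FractionRing R) * algebraMap R (FractionRing R) u
          = (y : FractionRing R) * algebraMap R (FractionRing R) u :=
        congrArg (fun g : ↥M →ₗ[R] ↥N => ((g ⟨_, hmem⟩ : ↥N) : FractionRing R)) h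
      rw [mul_comm _ (algebraMap R (FractionRing R) u),
        mul_comm _ (algebraMap R (FractionRing R) u)] at h2
      exact Subtype.ext (huu.mul_left_cancel h2),
     by
      intro f
      obtain ⟨x, hx, key⟩ := exists_mul_of_linearMap M N hu hmem f
      exact ⟨⟨x, hx⟩, LinearMap.ext fun m => Subtype.ext (key m m.2).symm⟩⟩


noncomputable def toDual (M : Submodule R (FractionRing R)) :
    ↥((1 : Submodule R (FractionRing R)) / M) →ₗ[R] ((↥M) →ₗ[R] R) :=
  (LinearMap.llcomp R (↥M) (↥(1 : Submodule R (FractionRing R))) R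
    equivOne.symm.toLinearMap).comp (mulMap M (1 : Submodule R (FractionRing R)))

@[simp] lemma toDual_apply (M : Submodule R (FractionRing R))
    (y : ↥((1 : Submodule R (FractionRing R)) / M)) (s : ↥M) :
    algebraMap R (FractionRing R) (toDual M y s) = (y : FractionRing R) * (s : FractionRing R) := by
  have h : toDual M y s = equivOne.symm ((mulMap M (1 : Submodule R (FractionRing R))) y s) := rfl
  have h2 := equivOne_apply (R := R)
    (equivOne.symm ((mulMap M (1 : Submodule R (FractionRing R))) y s))
  rw [LinearEquiv.apply_symm_apply] at h2
  rw [h, ← h2]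
  exact mulMap_apply _ _ _ _

lemma core {R : Type u} [CommRing R] (T : Submodule R (FractionRing R)) (h1T : (1 : FractionRing R) ∈ T)
    (hmul : ∀ a ∈ T, ∀ b ∈ T, a * b ∈ T) (hFG : T.FG)
    (e0 : (↥T) ≃ₗ[R] ((↥T) →ₗ[R] R)) :
    Module.IsReflexive R ↥T ∧
      Nonempty ((↥((1 : Submodule R (FractionRing R)) / T)) ≃ₗ[R]
        ((↥((1 : Submodule R (FractionRing R)) / T)) →ₗ[R]
          (↥((1 : Submodule R (FractionRing R)) / T)))) := by
  classical
  have h1nzd : (1 : R) ∈ nonZeroDivisors R := Submonoid.one_mem _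
  have h1mem : algebraMap R (FractionRing R) (1 : R) ∈ T := by simpa using h1T
  -- common denominator
  obtain ⟨gens, hgens⟩ := hFG
  obtain ⟨b, hb⟩ := IsLocalization.exist_integer_multiples_of_finset (nonZeroDivisors R) gens
  have hdc : algebraMap R (FractionRing R) (b : R) ∈ (1 : Submodule R (FractionRing R)) / T := by
    rw [Submodule.mem_div_iff_forall_mul_mem]
    intro y hy
    have hle : T ≤ Submodule.comap
        (LinearMap.mulLeft R (algebraMap R (FractionRing R) (b : R)))
        (1 : Submodule R (FractionRing R)) := by
      rw [← hgens, Submodule.span_le]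
      intro a ha
      simp only [SetLike.mem_coe, Submodule.mem_comap, LinearMap.mulLeft_apply]
      obtain ⟨r, hr⟩ := hb a ha
      rw [Submodule.one_eq_range]
      exact ⟨r, by rw [Algebra.linearMap_apply, hr, Algebra.smul_def]⟩
    exact hle hy
  have hdu : IsUnit (algebraMap R (FractionRing R) (b : R)) :=
    IsLocalization.map_units (FractionRing R) b
  -- the equivalence e : T ≃ 1/T and its multiplier x
  let e : (↥T) ≃ₗ[R] ↥((1 : Submodule R (FractionRing R)) / T) :=
    (e0.trans (LinearEquiv.congrRight equivOne)).trans (divHomEquiv T 1 h1nzd h1mem).symm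
  obtain ⟨x, hxdiv, hx⟩ :=
    exists_mul_of_linearMap T ((1 : Submodule R (FractionRing R)) / T) h1nzd h1mem e.toLinearMap
  have esurj : ∀ y ∈ (1 : Submodule R (FractionRing R)) / T, ∃ s ∈ T, x * s = y := by
    intro y hy
    obtain ⟨⟨s, hs⟩, hes⟩ := e.surjective ⟨y, hy⟩
    exact ⟨s, hs, (hx s hs).symm.trans (congrArg Subtype.val hes)⟩
  have hxu : IsUnit x := by
    obtain ⟨s, hs, hxs⟩ := esurj _ hdc
    rw [← hxs] at hdu
    exact isUnit_of_mul_isUnit_left hdu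
  -- the key equality 1/(1/T) = T
  have hSle : T ≤ (1 : Submodule R (FractionRing R)) / ((1 : Submodule R (FractionRing R)) / T) := by
    intro s hs
    rw [Submodule.mem_div_iff_forall_mul_mem]
    intro y hy
    have h := Submodule.mem_div_iff_forall_mul_mem.mp hy s hs
    rwa [mul_comm] at h
  have hkey : (1 : Submodule R (FractionRing R)) / ((1 : Submodule R (FractionRing R)) / T) = T := by
    refine le_antisymm ?_ hSle
    intro z hz
    have hxz : x * z ∈ (1 : Submodule R (FractionRing R)) / T := by
      rw [Submodule.mem_div_iff_forall_mul_mem]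
      intro s hs
      have h1 : x * s ∈ (1 : Submodule R (FractionRing R)) / T :=
        Submodule.mem_div_iff_forall_mul_mem.mp hxdiv s hs
      have h2 : z * (x * s) ∈ (1 : Submodule R (FractionRing R)) :=
        Submodule.mem_div_iff_forall_mul_mem.mp hz _ h1
      rw [show x * z * s = z * (x * s) by ring]
      exact h2
    obtain ⟨s, hs, hxs⟩ := esurj _ hxz
    have hsz : s = z := hxu.mul_left_cancel hxs
    exact hsz ▸ hs
  have hcle1 : (1 : Submodule R (FractionRing R)) / T ≤ (1 : Submodule R (FractionRing R)) := by
    intro y hy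
    have h := Submodule.mem_div_iff_forall_mul_mem.mp hy 1 h1T
    simpa using h
  have hcc : ((1 : Submodule R (FractionRing R)) / T) / ((1 : Submodule R (FractionRing R)) / T)
      = T := by
    refine le_antisymm ?_ ?_
    · intro w hw
      rw [← hkey, Submodule.mem_div_iff_forall_mul_mem]
      intro y hy
      exact hcle1 (Submodule.mem_div_iff_forall_mul_mem.mp hw y hy)
    · intro s hs
      rw [Submodule.mem_div_iff_forall_mul_mem]
      intro y hy
      rw [Submodule.mem_div_iff_forall_mul_mem]
      intro t ht
      have hst : s * t ∈ T := hmul s hs t ht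
      have h := Submodule.mem_div_iff_forall_mul_mem.mp hy _ hst
      rw [show s * y * t = y * (s * t) by ring]
      exact h
  constructor
  · -- reflexivity
    constructor
    constructor
    · rw [injective_iff_map_eq_zero]
      intro m hm
      have h0 : toDual T ⟨algebraMap R (FractionRing R) (b : R), hdc⟩ m = 0 := by
        have h := congrArg (fun g => g (toDual T ⟨algebraMap R (FractionRing R) (b : R), hdc⟩)) hm
        simpa [Module.Dual.eval_apply] using h
      have h2 : algebraMap R (FractionRing R) (b : R) * (m : FractionRing R) = 0 := by
        have h3 := toDual_apply T ⟨algebraMap R (FractionRing R) (b : R), hdc⟩ m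
        rw [h0, map_zero] at h3
        exact h3.symm
      apply Subtype.ext
      apply hdu.mul_left_cancel
      rw [h2]
      simp
    · intro G
      let g : (↥((1 : Submodule R (FractionRing R)) / T)) →ₗ[R]
          ↥(1 : Submodule R (FractionRing R)) :=
        equivOne.toLinearMap.comp (G.comp (toDual T))
      obtain ⟨z, hz, hzkey⟩ := exists_mul_of_linearMap
        ((1 : Submodule R (FractionRing R)) / T) (1 : Submodule R (FractionRing R)) b.2 hdc g
      have hzT : z ∈ T := hkey ▸ hz
      refine ⟨⟨z, hzT⟩, ?_⟩
      apply LinearMap.ext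
      intro f
      obtain ⟨y, hy, hykey⟩ := exists_mul_of_linearMap T (1 : Submodule R (FractionRing R))
        h1nzd h1mem (equivOne.toLinearMap.comp f)
      have hyco : ∀ (s : FractionRing R) (hs : s ∈ T),
          algebraMap R (FractionRing R) (f ⟨s, hs⟩) = y * s := by
        intro s hs
        exact (equivOne_apply (f ⟨s, hs⟩)).symm.trans (hykey s hs)
      have hfF : f = toDual T ⟨y, hy⟩ := by
        apply LinearMap.ext
        intro s
        apply IsFractionRing.injective R (FractionRing R)
        rw [toDual_apply]
        exact hyco s s.2
      have hGf : algebraMap R (FractionRing R) (G f) = z * y := by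
        rw [hfF]
        exact (equivOne_apply (G (toDual T ⟨y, hy⟩))).symm.trans (hzkey y hy)
      have hfz : algebraMap R (FractionRing R) (f ⟨z, hzT⟩) = y * z := hyco z hzT
      have hfin : f ⟨z, hzT⟩ = G f := by
        apply IsFractionRing.injective R (FractionRing R)
        rw [hfz, hGf, mul_comm]
      simpa [Module.Dual.eval_apply] using hfin
  · exact ⟨(e.symm.trans (LinearEquiv.ofEq _ _ hcc.symm)).trans (divHomEquiv _ _ b.2 hdc)⟩

end ConductorAux

/-- if `S ≅ Hom_R(S, R)`, then `S` is a reflexive `R`-module and the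
conductor `c_R(S) = (R : S)` is a stable ideal. -/
theorem reflexive_and_conductor_stable_of_selfdual (R : Type u) [CommRing R]
    (hCM : IsCohenMacaulayLocalRing R) (hdim : ringKrullDim R = 1)
    (hGG : IsGenericallyGorenstein R)
    (S : Subalgebra R (FractionRing R)) (hfin : Module.Finite R S)
    (hdual : Nonempty (S ≃ₗ[R] (S →ₗ[R] R))) :
    Module.IsReflexive R S ∧
      Nonempty ((↥(conductorFrac R S)) ≃ₗ[R]
        ((↥(conductorFrac R S)) →ₗ[R] (↥(conductorFrac R S)))) := by
  obtain ⟨e0⟩ := hdual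
  exact ConductorAux.core (Subalgebra.toSubmodule S) S.one_mem
    (fun a ha b hb => S.mul_mem ha hb) (Module.Finite.iff_fg.mp hfin) e0
end

section
/- Let R be a generically Gorenstein local Cohen–Macaulay Noetherian ring of dimension 1 and let R ⊆ S ⊆ Q(R) be a module finite birational extension such that S is a reflexive R-module and the conductor c_R(S) = (R : S) is a stable ideal. Then S ≅ Hom_R(S, R) as R-modules. -/
set_option maxHeartbeats 1000000
set_option synthInstance.maxHeartbeats 400000

open CategoryTheory

universe u

variable {R : Type u} [CommRing R]
open nonZeroDivisors

theorem key_rel (M N : Submodule R (FractionRing R)) (f : ↥M →ₗ[R] ↥N)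
    (u : R) (hu : algebraMap R (FractionRing R) u ∈ M)
    {y : FractionRing R} (hy : y ∈ M) :
    (f ⟨algebraMap R (FractionRing R) u, hu⟩ : FractionRing R) * y
      = algebraMap R (FractionRing R) u * (f ⟨y, hy⟩ : FractionRing R) := by
  obtain ⟨⟨a, b⟩, hab⟩ := IsLocalization.surj (nonZeroDivisors R) y
  set φ := algebraMap R (FractionRing R) with hφ
  have hbu : IsUnit (φ (b : R)) := IsLocalization.map_units _ b
  apply hbu.mul_left_cancel
  have e1 : ((b : R) * u) • (⟨y, hy⟩ : ↥M) = a • (⟨φ u, hu⟩ : ↥M) := by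
    apply Subtype.ext
    show ((b : R) * u) • y = a • φ u
    rw [Algebra.smul_def, Algebra.smul_def, map_mul, ← hab]
    ring
  have e2 : ((b : R) * u) • (f ⟨y, hy⟩) = a • (f ⟨φ u, hu⟩) := by
    rw [← map_smul, ← map_smul, e1]
  have e3 : φ ((b : R) * u) * (f ⟨y, hy⟩ : FractionRing R)
      = φ a * (f ⟨φ u, hu⟩ : FractionRing R) := by
    have := congrArg (Subtype.val) e2
    simpa [Algebra.smul_def] using this
  calc φ (b : R) * ((f ⟨φ u, hu⟩ : FractionRing R) * y)
      = φ a * (f ⟨φ u, hu⟩ : FractionRing R) := by rw [← hab]; ring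
    _ = φ ((b : R) * u) * (f ⟨y, hy⟩ : FractionRing R) := e3.symm
    _ = φ (b : R) * (φ u * (f ⟨y, hy⟩ : FractionRing R)) := by rw [map_mul]; ring

/-- Hom between submodules of the fraction field is given by multiplication. -/
noncomputable def mulHomEquiv (M N : Submodule R (FractionRing R))
    (u : nonZeroDivisors R) (hu : algebraMap R (FractionRing R) (u : R) ∈ M) :
    (↥M →ₗ[R] ↥N) ≃ₗ[R] ↥(N / M) where
  toFun f := ⟨(((IsLocalization.map_units (FractionRing R) u).unit⁻¹ : _) : FractionRing R)
      * (f ⟨algebraMap R (FractionRing R) (u : R), hu⟩ : FractionRing R), by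
    rw [Submodule.mem_div_iff_forall_mul_mem]
    intro y hy
    have h := key_rel M N f (u : R) hu hy
    have : (((IsLocalization.map_units (FractionRing R) u).unit⁻¹ : _) : FractionRing R)
        * (f ⟨algebraMap R (FractionRing R) (u : R), hu⟩ : FractionRing R) * y
        = (f ⟨y, hy⟩ : FractionRing R) := by
      rw [mul_assoc, h, ← mul_assoc, IsUnit.val_inv_mul, one_mul]
    rw [this]
    exact (f ⟨y, hy⟩).2⟩
  map_add' f g := by
    apply Subtype.ext
    show _ = _
    simp [mul_add]
  map_smul' r f := by
    apply Subtype.ext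
    simp [Algebra.smul_def]
    ring
  invFun x :=
    { toFun := fun m => ⟨(x : FractionRing R) * (m : FractionRing R),
        Submodule.mem_div_iff_forall_mul_mem.mp x.2 m m.2⟩
      map_add' := fun m m' => by apply Subtype.ext; simp [mul_add]
      map_smul' := fun r m => by apply Subtype.ext; simp [Algebra.smul_def]; ring }
  left_inv f := by
    ext m
    show (((IsLocalization.map_units (FractionRing R) u).unit⁻¹ : _) : FractionRing R)
        * (f ⟨algebraMap R (FractionRing R) (u : R), hu⟩ : FractionRing R) * (m : FractionRing R)
        = (f m : FractionRing R)
    rw [mul_assoc, key_rel M N f (u : R) hu m.2, ← mul_assoc, IsUnit.val_inv_mul, one_mul]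
  right_inv x := by
    apply Subtype.ext
    show (((IsLocalization.map_units (FractionRing R) u).unit⁻¹ : _) : FractionRing R)
        * ((x : FractionRing R) * algebraMap R (FractionRing R) (u : R)) = (x : FractionRing R)
    rw [mul_comm (x : FractionRing R), ← mul_assoc, IsUnit.val_inv_mul, one_mul]

theorem mulHomEquiv_spec (M N : Submodule R (FractionRing R))
    (u : nonZeroDivisors R) (hu : algebraMap R (FractionRing R) (u : R) ∈ M)
    (f : ↥M →ₗ[R] ↥N) {y : FractionRing R} (hy : y ∈ M) :
    ((mulHomEquiv M N u hu f : FractionRing R)) * y = (f ⟨y, hy⟩ : FractionRing R) := by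
  show (((IsLocalization.map_units (FractionRing R) u).unit⁻¹ : _) : FractionRing R)
      * (f ⟨algebraMap R (FractionRing R) (u : R), hu⟩ : FractionRing R) * y = _
  rw [mul_assoc, key_rel M N f (u : R) hu hy, ← mul_assoc, IsUnit.val_inv_mul, one_mul]

theorem mulHomEquiv_symm_spec (M N : Submodule R (FractionRing R))
    (u : nonZeroDivisors R) (hu : algebraMap R (FractionRing R) (u : R) ∈ M)
    (x : ↥(N / M)) (m : ↥M) :
    (((mulHomEquiv M N u hu).symm x) m : FractionRing R) = (x : FractionRing R) * m := rfl

/-- STATEMENT 12: if `S` is a reflexive `R`-module and the conductor `c_R(S) = (R : S)`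
is a stable ideal, then `S ≅ Hom_R(S, R)`. -/theorem selfdual_of_reflexive_and_conductor_stable (R : Type u) [CommRing R]
    (hCM : IsCohenMacaulayLocalRing R) (hdim : ringKrullDim R = 1)
    (hGG : IsGenericallyGorenstein R)
    (S : Subalgebra R (FractionRing R)) (hfin : Module.Finite R S)
    (hrefl : Module.IsReflexive R S)
    (hstable : Nonempty ((↥(conductorFrac R S)) ≃ₗ[R]
      ((↥(conductorFrac R S)) →ₗ[R] (↥(conductorFrac R S))))) :
    Nonempty (S ≃ₗ[R] (S →ₗ[R] R)) := by
  classical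
  set Q := FractionRing R
  set φ := algebraMap R Q with hφ
  set S' : Submodule R Q := Subalgebra.toSubmodule S with hS'
  set c : Submodule R Q := conductorFrac R S with hc
  have hc_def : c = (1 : Submodule R Q) / S' := rfl
  -- the identity equiv between ↥S and ↥S'
  let eSS' : (↥S ≃ₗ[R] ↥S') := LinearEquiv.refl R ↥S
  -- R ≃ (1 : Submodule R Q)
  have hρmem : ∀ r : R, φ r ∈ (1 : Submodule R Q) := fun r => Submodule.mem_one.mpr ⟨r, rfl⟩
  let ρ : R →ₗ[R] ↥(1 : Submodule R Q) := (Algebra.linearMap R Q).codRestrict 1 hρmem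
  have hρbij : Function.Bijective ρ := by
    constructor
    · intro x y hxy
      apply IsFractionRing.injective R Q
      exact congrArg Subtype.val hxy
    · rintro ⟨x, hx⟩
      obtain ⟨y, hy⟩ := Submodule.mem_one.mp hx
      exact ⟨y, Subtype.ext hy⟩
  let r1 : R ≃ₗ[R] ↥(1 : Submodule R Q) := LinearEquiv.ofBijective ρ hρbij
  have hr1 : ∀ r : R, (r1 r : Q) = φ r := fun r => rfl
  -- find a common denominator b for S
  have hfg : S'.FG := Module.Finite.iff_fg.mp hfin
  obtain ⟨T, hT⟩ := hfg
  obtain ⟨b, hb⟩ := IsLocalization.exist_integer_multiples_of_finset (nonZeroDivisors R) T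
  have hbS : φ (b : R) ∈ S' := by
    have h1S : (1 : Q) ∈ S' := S.one_mem
    have := S'.smul_mem (b : R) h1S
    rwa [Algebra.smul_def, mul_one] at this
  have hbc : φ (b : R) ∈ c := by
    rw [hc_def, Submodule.mem_div_iff_forall_mul_mem]
    intro y hy
    rw [← hT] at hy
    induction hy using Submodule.span_induction with
    | mem x hx =>
        obtain ⟨r, hr⟩ := hb x hx
        rw [Algebra.smul_def] at hr
        exact Submodule.mem_one.mpr ⟨r, hr⟩
    | zero => rw [mul_zero]; exact Submodule.zero_mem _
    | add x y _ _ hx hy => rw [mul_add]; exact Submodule.add_mem _ hx hy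
    | smul r x _ hx =>
        rw [Algebra.smul_def, show φ (b:R) * (φ r * x) = φ r * (φ (b:R) * x) by ring,
          ← Algebra.smul_def]
        exact Submodule.smul_mem _ r hx
  have h1S : (1 : Q) ∈ S' := S.one_mem
  -- c ≤ 1
  have hc1 : c ≤ (1 : Submodule R Q) := by
    intro x hx
    have := (Submodule.mem_div_iff_forall_mul_mem.mp (hc_def ▸ hx)) 1 h1S
    rwa [mul_one] at this
  -- the duality equiv E : Dual S ≃ c
  let E0 : ((↥S →ₗ[R] R) ≃ₗ[R] (↥S' →ₗ[R] ↥(1 : Submodule R Q))) :=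
    LinearEquiv.arrowCongr eSS' r1
  let E : ((↥S →ₗ[R] R) ≃ₗ[R] ↥((1 : Submodule R Q) / S')) :=
    E0.trans (mulHomEquiv S' 1 b hbS)
  have hEspec : ∀ (f : ↥S →ₗ[R] R) (s : ↥S),
      (E f : Q) * (s : Q) = φ (f s) := by
    intro f s
    have hy : (s : Q) ∈ S' := s.2
    have h := mulHomEquiv_spec S' 1 b hbS (E0 f) hy
    rw [show (E f : Q) = ((mulHomEquiv S' 1 b hbS) (E0 f) : Q) from rfl, h]
    show ((E0 f) ⟨(s : Q), hy⟩ : Q) = φ (f s)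
    rw [LinearEquiv.arrowCongr_apply]
    rfl
  -- key step : 1 / c ≤ S'
  have hsub : (1 : Submodule R Q) / c ≤ S' := by
    intro z hz
    -- build the double-dual functional
    let mulZ : ↥c →ₗ[R] ↥(1 : Submodule R Q) := (mulHomEquiv c 1 b hbc).symm ⟨z, hz⟩
    let D : Module.Dual R (Module.Dual R ↥S) :=
      (r1.symm.toLinearMap.comp mulZ).comp E.toLinearMap
    obtain ⟨s, hs⟩ := (Module.bijective_dual_eval R ↥S).surjective D
    have hfs : ∀ f : ↥S →ₗ[R] R, f s = D f := by
      intro f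
      rw [← hs]; rfl
    -- evaluate at f := E.symm ⟨φ b, hbc⟩
    set f : ↥S →ₗ[R] R := E.symm ⟨φ (b : R), hbc⟩ with hf
    have hEf : (E f : Q) = φ (b : R) := by rw [hf, E.apply_symm_apply]
    have h1 : φ (f s) = (E f : Q) * (s : Q) := (hEspec f s).symm
    have h2 : φ (f s) = z * (E f : Q) := by
      have : r1 (f s) = mulZ (E f) := by
        rw [hfs f]
        show r1 (r1.symm (mulZ (E f))) = mulZ (E f)
        exact r1.apply_symm_apply _
      have hval := congrArg Subtype.val this
      rw [hr1] at hval
      rw [hval]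
      exact mulHomEquiv_symm_spec c 1 b hbc ⟨z, hz⟩ (E f)
    have h3 : φ (b : R) * (s : Q) = φ (b : R) * z := by
      rw [← hEf]
      rw [← h1, h2, mul_comm]
    have hzs : z = (s : Q) :=
      ((IsLocalization.map_units Q b).mul_left_cancel h3).symm
    rw [hzs]
    exact s.2
  -- c / c = S'
  have hcc : S' = c / c := by
    apply le_antisymm
    · intro x hx
      rw [Submodule.mem_div_iff_forall_mul_mem]
      intro y hy
      rw [hc_def, Submodule.mem_div_iff_forall_mul_mem]
      intro t ht
      have hxt : x * t ∈ S' := S.mul_mem hx ht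
      have := Submodule.mem_div_iff_forall_mul_mem.mp (hc_def ▸ hy) _ hxt
      rw [show x * y * t = y * (x * t) by ring]
      exact this
    · intro x hx
      apply hsub
      rw [Submodule.mem_div_iff_forall_mul_mem]
      intro y hy
      exact hc1 (Submodule.mem_div_iff_forall_mul_mem.mp hx y hy)
  -- assemble
  refine ⟨?_⟩
  let e2 : (↥S' ≃ₗ[R] ↥(c / c)) := LinearEquiv.ofEq S' (c / c) hcc
  let e3 : (↥(c / c) ≃ₗ[R] (↥c →ₗ[R] ↥c)) := (mulHomEquiv c c b hbc).symm
  let e4 : ((↥c →ₗ[R] ↥c) ≃ₗ[R] ↥c) := hstable.some.symm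
  exact (((eSS'.trans e2).trans e3).trans e4).trans E.symm
end

section
/- Let R be a commutative Noetherian ring and let R ⊆ S ⊆ Q(R) be a module finite birational extension such that S ≅ Hom_R(S, R) as R-modules. Then the conductor c_R(S) = (R : S) is a regular stable trace ideal of R; in particular c_R(S) = tr_R(S) = (R : S)S, c_R(S) contains a nonzerodivisor of R, and c_R(S) ≅ Hom_R(c_R(S), c_R(S)) as R-modules. -/
set_option maxHeartbeats 1000000
set_option synthInstance.maxHeartbeats 400000

open CategoryTheory

universe u

namespace CondAux
variable {R : Type u} [CommRing R]

theorem mul_hom_eq (M N : Submodule R (FractionRing R)) (f : M →ₗ[R] N) (d : R)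
    (hd : algebraMap R (FractionRing R) d ∈ M) (m : M) :
    algebraMap R (FractionRing R) d * (f m : FractionRing R)
      = (f ⟨algebraMap R (FractionRing R) d, hd⟩ : FractionRing R) * (m : FractionRing R) := by
  obtain ⟨⟨p, q⟩, hq⟩ := IsLocalization.surj (nonZeroDivisors R) (m : FractionRing R)
  have key : (q : R) • ((d : R) • m) = p • (⟨_, hd⟩ : M) := by
    apply Subtype.ext
    show (q:R) • ((d:R) • (m:FractionRing R)) = p • algebraMap R (FractionRing R) d
    rw [Algebra.smul_def, Algebra.smul_def, Algebra.smul_def]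
    rw [← mul_assoc, mul_comm (algebraMap R (FractionRing R) q) _, mul_assoc, mul_comm (algebraMap R (FractionRing R) q) _]
    rw [hq]
    ring
  have key2 := congrArg f key
  rw [map_smul, map_smul, map_smul] at key2
  have key3 := congrArg (Subtype.val) key2
  simp only [SetLike.val_smul, Algebra.smul_def] at key3
  -- key3 : algebraMap q * (algebraMap d * f m) = algebraMap p * f ⟨algebraMap d, hd⟩
  have hu : IsUnit (algebraMap R (FractionRing R) (q:R)) :=
    IsLocalization.map_units (FractionRing R) q
  apply hu.mul_left_cancel
  calc algebraMap R (FractionRing R) (q:R) * (algebraMap R (FractionRing R) d * (f m : FractionRing R))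
      = (algebraMap R (FractionRing R)) p * ↑(f ⟨_, hd⟩) := key3
    _ = (f ⟨_, hd⟩ : FractionRing R) * algebraMap R (FractionRing R) p := by ring
    _ = (f ⟨_, hd⟩ : FractionRing R) * ((m : FractionRing R) * algebraMap R (FractionRing R) (q:R)) := by rw [hq]
    _ = algebraMap R (FractionRing R) (q:R) * ((f ⟨_, hd⟩ : FractionRing R) * (m : FractionRing R)) := by ring

theorem unit_inv_mul_cancel {A : Type u} [Monoid A] {u : A} (hu : IsUnit u) (z : A) :
    (hu.unit⁻¹ : Aˣ) * (u * z) = z := by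
  have h : (hu.unit : A) = u := hu.unit_spec
  calc (hu.unit⁻¹ : Aˣ) * (u * z) = (hu.unit⁻¹ : Aˣ) * ((hu.unit : A) * z) := by rw [h]
    _ = z := Units.inv_mul_cancel_left _ _

/-- Multiplication by an element of `N / M` as a linear map `M →ₗ N`. -/
noncomputable def mulHom (M N : Submodule R (FractionRing R)) (x : ↥(N / M)) :
    M →ₗ[R] N where
  toFun m := ⟨(x : FractionRing R) * (m : FractionRing R),
    Submodule.mem_div_iff_forall_mul_mem.mp x.2 _ m.2⟩
  map_add' a b := by apply Subtype.ext; show (x:FractionRing R) * (↑a + ↑b) = _ ; push_cast; ring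
  map_smul' r a := by
    apply Subtype.ext
    show (x : FractionRing R) * ((r • a : M) : FractionRing R) = r • ((x : FractionRing R) * a)
    rw [SetLike.val_smul, Algebra.smul_def, Algebra.smul_def]; ring

/-- `N / M ≃ Hom(M, N)` when `M` contains the image of a nonzerodivisor. -/
noncomputable def divEquivHom (M N : Submodule R (FractionRing R)) (d : R)
    (hd0 : d ∈ nonZeroDivisors R) (hd : algebraMap R (FractionRing R) d ∈ M) :
    ↥(N / M) ≃ₗ[R] (M →ₗ[R] N) := by
  have hu : IsUnit (algebraMap R (FractionRing R) d) :=
    IsLocalization.map_units (FractionRing R) (⟨d, hd0⟩ : nonZeroDivisors R)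
  refine
  { toFun := mulHom M N
    map_add' := ?_
    map_smul' := ?_
    invFun := fun f => ⟨(hu.unit⁻¹ : (FractionRing R)ˣ) * (f ⟨_, hd⟩ : FractionRing R), ?_⟩
    left_inv := ?_
    right_inv := ?_ }
  · intro a b; ext m
    show ((a:FractionRing R) + b) * m = (a:FractionRing R) * m + (b:FractionRing R) * m
    ring
  · intro r a; ext m
    show (r • (a : FractionRing R)) * m = r • ((a : FractionRing R) * m)
    rw [Algebra.smul_def, Algebra.smul_def]; ring
  · rename_i f
    apply Submodule.mem_div_iff_forall_mul_mem.mpr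
    intro y hy
    have h1 := mul_hom_eq M N f d hd ⟨y, hy⟩
    have h2 : (hu.unit⁻¹ : (FractionRing R)ˣ) * ((f ⟨_, hd⟩ : FractionRing R) * y)
        = (f ⟨y, hy⟩ : FractionRing R) := by
      rw [← h1]; exact unit_inv_mul_cancel hu _
    rw [mul_assoc, h2]
    exact (f ⟨y, hy⟩).2
  · intro x
    apply Subtype.ext
    show (hu.unit⁻¹ : (FractionRing R)ˣ) * ((mulHom M N x) ⟨_, hd⟩ : FractionRing R) = x
    show (hu.unit⁻¹ : (FractionRing R)ˣ) * ((x : FractionRing R) * algebraMap R (FractionRing R) d) = x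
    rw [mul_comm (x : FractionRing R) _]
    exact unit_inv_mul_cancel hu _
  · intro f
    ext m
    show ((hu.unit⁻¹ : (FractionRing R)ˣ) * (f ⟨_, hd⟩ : FractionRing R)) * m
        = (f m : FractionRing R)
    rw [mul_assoc, ← mul_hom_eq M N f d hd m]
    exact unit_inv_mul_cancel hu _

/-- `(1 : Submodule R (FractionRing R)) ≃ₗ R`. -/
noncomputable def oneEquiv : ↥(1 : Submodule R (FractionRing R)) ≃ₗ[R] R :=
  ((LinearEquiv.ofInjective (Algebra.linearMap R (FractionRing R))
      (IsFractionRing.injective R (FractionRing R))).trans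
    (LinearEquiv.ofEq _ _ Submodule.one_eq_range.symm)).symm

@[simp] theorem oneEquiv_symm_apply (r : R) :
    ((oneEquiv (R := R)).symm r : FractionRing R) = algebraMap R (FractionRing R) r := rfl

end CondAux

open CondAux in
/-- if `S ≅ Hom_R(S, R)` for a module finite birational extension `S` of
a commutative Noetherian ring `R`, then the conductor `c_R(S) = (R : S)` is a regular
stable trace ideal: `c_R(S) = tr_R(S) = (R : S)S`, it contains a nonzerodivisor, and
`c_R(S) ≅ Hom_R(c_R(S), c_R(S))`. -/
theorem conductor_regular_stable_trace_of_selfdual (R : Type u) [CommRing R]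
    [IsNoetherianRing R]
    (S : Subalgebra R (FractionRing R)) (hfin : Module.Finite R S)
    (hdual : Nonempty (S ≃ₗ[R] (S →ₗ[R] R))) :
    conductorFrac R S = (traceIdeal R S).toFrac ∧
    conductorFrac R S = conductorFrac R S * Subalgebra.toSubmodule S ∧
    (∃ a ∈ nonZeroDivisors R, algebraMap R (FractionRing R) a ∈ conductorFrac R S) ∧
    Nonempty ((↥(conductorFrac R S)) ≃ₗ[R]
      ((↥(conductorFrac R S)) →ₗ[R] (↥(conductorFrac R S)))) := by
  classical
  set K := FractionRing R with hK
  let SM : Submodule R K := Subalgebra.toSubmodule S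
  have hone : (1 : K) ∈ SM := S.one_mem
  have h1le : algebraMap R K 1 ∈ SM := by rw [map_one]; exact hone
  have h1nzd : (1 : R) ∈ nonZeroDivisors R := Submonoid.one_mem _
  have hcond : conductorFrac R S = (1 : Submodule R K) / SM := rfl
  -- common denominator
  have hSMfg : SM.FG := by
    have : Module.Finite R ↥SM := hfin
    exact (Submodule.fg_top SM).mp (Module.finite_def.mp this)
  obtain ⟨T, hT⟩ := hSMfg
  obtain ⟨b, hb⟩ := IsLocalization.exist_integer_multiples (nonZeroDivisors R) T (id : K → K)
  have hbmem : algebraMap R K (b : R) ∈ conductorFrac R S := by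
    rw [hcond]
    apply Submodule.mem_div_iff_forall_mul_mem.mpr
    intro y hy
    have hle : SM ≤ Submodule.comap (LinearMap.mulLeft R (algebraMap R K (b : R)))
        (1 : Submodule R K) := by
      rw [← hT, Submodule.span_le]
      intro t ht
      obtain ⟨y0, hy0⟩ := hb t ht
      show algebraMap R K (b : R) * t ∈ (1 : Submodule R K)
      rw [Submodule.one_eq_range]
      exact ⟨y0, by simpa [Algebra.smul_def] using hy0⟩
    exact hle hy
  -- stability of the conductor under multiplication by SM
  have hmul : conductorFrac R S = conductorFrac R S * SM := by
    apply le_antisymm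
    · intro x hx
      have := Submodule.mul_mem_mul hx hone
      rwa [mul_one] at this
    · apply Submodule.mul_le.mpr
      intro x hx s hs
      rw [hcond] at hx ⊢
      apply Submodule.mem_div_iff_forall_mul_mem.mpr
      intro t ht
      rw [mul_assoc]
      exact Submodule.mem_div_iff_forall_mul_mem.mp hx _
        (Subalgebra.mem_toSubmodule S |>.mpr
          (S.mul_mem ((Subalgebra.mem_toSubmodule S).mp hs) ((Subalgebra.mem_toSubmodule S).mp ht)))
  -- the conductor equals the trace ideal of S
  have htrace : conductorFrac R S = (traceIdeal R S).toFrac := by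
    apply le_antisymm
    · intro x hx
      rw [hcond] at hx
      let fx : ↥SM →ₗ[R] R := (oneEquiv : ↥(1 : Submodule R K) ≃ₗ[R] R).toLinearMap ∘ₗ
        mulHom SM 1 ⟨x, hx⟩
      have hx1 : algebraMap R K (fx ⟨1, hone⟩) = x := by
        have : ((mulHom SM (1 : Submodule R K) ⟨x, hx⟩) ⟨1, hone⟩ : K) = x * 1 := rfl
        show algebraMap R K ((oneEquiv : ↥(1 : Submodule R K) ≃ₗ[R] R)
          ((mulHom SM 1 ⟨x, hx⟩) ⟨1, hone⟩)) = x
        rw [← oneEquiv_symm_apply, LinearEquiv.symm_apply_apply, this, mul_one]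
      rw [Ideal.toFrac]
      refine Submodule.mem_map.mpr ⟨fx ⟨1, hone⟩, ?_, hx1⟩
      exact (le_iSup (fun f : ↥S →ₗ[R] R => LinearMap.range f) fx)
        (LinearMap.mem_range_self fx ⟨1, hone⟩)
    · rw [Ideal.toFrac, traceIdeal, Submodule.map_iSup]
      apply iSup_le
      intro f
      intro x hx
      obtain ⟨r, ⟨s, rfl⟩, rfl⟩ := Submodule.mem_map.mp hx
      rw [hcond]
      apply Submodule.mem_div_iff_forall_mul_mem.mpr
      intro t ht
      let g : ↥SM →ₗ[R] ↥(1 : Submodule R K) :=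
        LinearMap.codRestrict 1 ((Algebra.linearMap R K) ∘ₗ f)
          (fun y => by rw [Submodule.one_eq_range]; exact ⟨f y, rfl⟩)
      have hgs : ∀ m : ↥SM, (g m : K) = algebraMap R K (f m) := fun _ => rfl
      have h1 := mul_hom_eq SM 1 g 1 h1le s
      have hst : s.1 * t ∈ SM := (Subalgebra.mem_toSubmodule S).mpr
        (S.mul_mem ((Subalgebra.mem_toSubmodule S).mp s.2) ((Subalgebra.mem_toSubmodule S).mp ht))
      have h2 := mul_hom_eq SM 1 g 1 h1le ⟨s.1 * t, hst⟩
      have hone' : algebraMap R K (1 : R) = 1 := map_one _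
      have key : algebraMap R K (f s) * t = (g ⟨s.1 * t, hst⟩ : K) := by
        calc algebraMap R K (f s) * t = (g s : K) * t := by rw [hgs]
          _ = (algebraMap R K 1 * (g s : K)) * t := by rw [hone', one_mul]
          _ = ((g ⟨algebraMap R K 1, h1le⟩ : K) * (s : K)) * t := by rw [h1]
          _ = (g ⟨algebraMap R K 1, h1le⟩ : K) * ((s : K) * t) := by rw [mul_assoc]
          _ = algebraMap R K 1 * (g ⟨s.1 * t, hst⟩ : K) := h2.symm
          _ = (g ⟨s.1 * t, hst⟩ : K) := by rw [hone', one_mul]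
      show algebraMap R K (f s) * t ∈ (1 : Submodule R K)
      rw [key]
      exact (g ⟨s.1 * t, hst⟩).2
  refine ⟨htrace, hmul, ⟨b, b.2, hbmem⟩, ?_⟩
  -- stability: c ≅ Hom(c, c)
  let c : Submodule R K := conductorFrac R S
  have hc1 : c ≤ 1 := by
    intro x hx
    have hx' : x ∈ (1 : Submodule R K) / SM := hx
    have := Submodule.mem_div_iff_forall_mul_mem.mp hx' 1 hone
    rwa [mul_one] at this
  have hdiv : c / c = (1 : Submodule R K) / c := by
    apply le_antisymm
    · intro x hx
      apply Submodule.mem_div_iff_forall_mul_mem.mpr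
      intro y hy
      exact hc1 (Submodule.mem_div_iff_forall_mul_mem.mp hx y hy)
    · intro x hx
      apply Submodule.mem_div_iff_forall_mul_mem.mpr
      intro y hy
      show x * y ∈ (1 : Submodule R K) / SM
      apply Submodule.mem_div_iff_forall_mul_mem.mpr
      intro t ht
      have hyt : y * t ∈ c := by
        have h3 : y * t ∈ conductorFrac R S * SM := Submodule.mul_mem_mul hy ht
        rwa [← hmul] at h3
      rw [mul_assoc]
      exact Submodule.mem_div_iff_forall_mul_mem.mp hx _ hyt
  have hbc : algebraMap R K (b : R) ∈ c := hbmem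
  let E0 : ↥c ≃ₗ[R] (↥SM →ₗ[R] ↥(1 : Submodule R K)) := divEquivHom SM 1 1 h1nzd h1le
  let E : ↥c ≃ₗ[R] ↥SM :=
    (E0.trans (LinearEquiv.congrRight oneEquiv)).trans hdual.some.symm
  let F0 : (↥c →ₗ[R] ↥c) ≃ₗ[R] ↥(c / c) := (divEquivHom c c (b : R) b.2 hbc).symm
  let F1 : ↥(c / c) ≃ₗ[R] ↥((1 : Submodule R K) / c) := LinearEquiv.ofEq _ _ hdiv
  let F2 : ↥((1 : Submodule R K) / c) ≃ₗ[R] (↥c →ₗ[R] ↥(1 : Submodule R K)) :=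
    divEquivHom c 1 (b : R) b.2 hbc
  let F3 : (↥c →ₗ[R] ↥(1 : Submodule R K)) ≃ₗ[R] (↥c →ₗ[R] R) :=
    LinearEquiv.congrRight oneEquiv
  let F4 : (↥c →ₗ[R] R) ≃ₗ[R] (↥SM →ₗ[R] R) :=
    LinearEquiv.arrowCongr E (LinearEquiv.refl R R)
  exact ⟨E.trans (hdual.some.trans (F4.symm.trans (F3.symm.trans (F2.symm.trans
    (F1.symm.trans F0.symm)))))⟩
end

section
/- Let R be a commutative Noetherian ring and let I be a regular stable trace ideal of R. Then S := (I : I) is a module finite birational extension of R satisfying S ≅ Hom_R(S, R) as R-modules (i.e. (R : (I : I)) ≅ (I : I)). -/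
set_option maxHeartbeats 1000000
set_option synthInstance.maxHeartbeats 400000

open CategoryTheory

universe u

/-!
Write `J ⊆ Q(R)` for the image of `I` and `S = J / J`. Over a localization of `R`, an `R`-linear
map `f : N → M` between submodules, where `N` contains a unit `u`, is multiplication by `f u / u`;
so `Hom(N, M) ≅ M / N`, whence `S ≅ End(J) ≅ End(I) ≅ I` by stability, and `Hom(N, R) ≅ 1 / N`.
Since `I` is a trace ideal, each `x ∈ 1 / J` maps `J` into `J`: for `f : M → R`, the map `x • f`
again lands in `R`, so its values lie in the trace `I`. Hence `S = 1 / J`, and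
`1 / S ≅ Hom(S, R) ≅ Hom(I, R) ≅ 1 / J = S`. Finiteness: `S ⊆ a⁻¹ J` for a nonzerodivisor `a ∈ I`.
-/

namespace Submodule

variable {R A : Type*} [CommRing R] [CommRing A] [Algebra R A]

theorem div_self_mul_div_self_le (N : Submodule R A) : N / N * (N / N) ≤ N / N :=
  mul_le.mpr fun x hx y hy z hz => mul_assoc x y z ▸ hx _ (hy _ hz)

theorem div_le_div_of_le_left {M M' : Submodule R A} (h : M ≤ M') (N : Submodule R A) :
    M / N ≤ M' / N :=
  fun _ hx y hy => h (hx y hy)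

theorem div_le_map_mulLeft {M N : Submodule R A} {u : A} (hu : IsUnit u) (huN : u ∈ N) :
    M / N ≤ M.map (LinearMap.mulLeft R ↑hu.unit⁻¹) :=
  fun x hx => ⟨x * u, hx u huN, by simp [mul_comm x u, ← mul_assoc]⟩

theorem fg_div_of_isUnit [IsNoetherianRing R] {M N : Submodule R A} (hM : M.FG) {u : A}
    (hu : IsUnit u) (huN : u ∈ N) : (M / N).FG :=
  (hM.map _).of_le (div_le_map_mulLeft hu huN)

def divToLinearMap (M N : Submodule R A) : ↥(M / N) →ₗ[R] ↥N →ₗ[R] ↥M :=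
  LinearMap.mk₂ R (fun x n => ⟨x * n, x.2 n n.2⟩)
    (fun _ _ _ => Subtype.ext (add_mul _ _ _)) (fun _ _ _ => Subtype.ext (smul_mul_assoc _ _ _))
    (fun _ _ _ => Subtype.ext (mul_add _ _ _)) (fun _ _ _ => Subtype.ext (mul_smul_comm _ _ _))

section FaithfulSMul

variable [FaithfulSMul R A]

variable (R A) in
noncomputable def oneLinearEquiv : R ≃ₗ[R] ↥(1 : Submodule R A) :=
  (LinearEquiv.ofInjective (Algebra.linearMap R A) (FaithfulSMul.algebraMap_injective R A)).trans
    (LinearEquiv.ofEq _ _ one_eq_range.symm)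

@[simp]
theorem coe_oneLinearEquiv_apply (r : R) : (oneLinearEquiv R A r : A) = algebraMap R A r :=
  rfl

theorem exists_algebraMap_comp_eq {M : Type*} [AddCommGroup M] [Module R M] (g : M →ₗ[R] A)
    (hg : ∀ w, g w ∈ (1 : Submodule R A)) :
    ∃ g' : M →ₗ[R] R, ∀ w, algebraMap R A (g' w) = g w :=
  ⟨(oneLinearEquiv R A).symm.toLinearMap ∘ₗ g.codRestrict 1 hg, fun w => by
    rw [← coe_oneLinearEquiv_apply]
    simp⟩

theorem one_div_le_div_self_of_eq_traceIdeal {I : Ideal R} {M : Type*} [AddCommGroup M]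
    [Module R M] (hI : I = traceIdeal R M) :
    1 / Submodule.map (Algebra.linearMap R A) I ≤
      Submodule.map (Algebra.linearMap R A) I / Submodule.map (Algebra.linearMap R A) I := by
  have hmem (f : M →ₗ[R] R) (w : M) : f w ∈ I :=
    hI ▸ le_iSup (fun f : M →ₗ[R] R => LinearMap.range f) f ⟨w, rfl⟩
  intro x hx y hy
  obtain ⟨i, hi, rfl⟩ := mem_map.mp hy
  set φ := LinearMap.mulLeft R x ∘ₗ Algebra.linearMap R A
  suffices traceIdeal R M ≤ (Submodule.map (Algebra.linearMap R A) I).comap φ from this (hI ▸ hi)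
  refine iSup_le fun f => ?_
  rintro _ ⟨w, rfl⟩
  obtain ⟨g, hg⟩ := exists_algebraMap_comp_eq (φ ∘ₗ f) fun w => hx _ (mem_map_of_mem (hmem f w))
  rw [mem_comap, ← LinearMap.comp_apply φ f, ← hg]
  exact mem_map_of_mem (hmem g w)

end FaithfulSMul

end Submodule

namespace IsLocalization

variable {R A : Type*} [CommRing R] [CommRing A] [Algebra R A]

theorem linearMap_apply_mul_comm (S : Submonoid R) [IsLocalization S A] {N M : Submodule R A}
    (f : ↥N →ₗ[R] ↥M) (n m : ↥N) : (f n : A) * m = f m * n := by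
  obtain ⟨⟨r, s⟩, hs⟩ := surj S (n : A)
  obtain ⟨⟨r', s'⟩, hs'⟩ := surj S (m : A)
  -- Clearing denominators, both sides of `hnm` are `s * s' * m * n`; as an identity between
  -- `R`-multiples of `n` and `m`, it passes through `f`.
  have hnm : (s : R) • r' • n = (s' : R) • r • m := by
    ext
    simp only [Submodule.coe_smul, Algebra.smul_def, ← hs, ← hs']
    ring
  have hf : (s : R) • r' • f n = (s' : R) • r • f m := by
    rw [← map_smul, ← map_smul, ← map_smul, ← map_smul, hnm]
  replace hf := congrArg Subtype.val hf
  simp only [Submodule.coe_smul, Algebra.smul_def, ← hs, ← hs'] at hf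
  refine ((map_units A s).mul (map_units A s')).mul_left_cancel ?_
  linear_combination hf

theorem linearMap_apply_eq_mul_of_isUnit (S : Submonoid R) [IsLocalization S A]
    {N M : Submodule R A} (f : ↥N →ₗ[R] ↥M) {u : A} (hu : IsUnit u) (huN : u ∈ N) (n : ↥N) :
    (f n : A) = f ⟨u, huN⟩ * ↑hu.unit⁻¹ * n := by
  rw [mul_right_comm, linearMap_apply_mul_comm S f ⟨u, huN⟩ n, mul_assoc]
  simp

noncomputable def divEquivLinearMap (S : Submonoid R) [IsLocalization S A]
    (M : Submodule R A) {N : Submodule R A} {u : A} (hu : IsUnit u) (huN : u ∈ N) :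
    ↥(M / N) ≃ₗ[R] (↥N →ₗ[R] ↥M) := by
  refine .ofBijective (Submodule.divToLinearMap M N) ⟨fun x y hxy => ?_, fun f => ?_⟩
  · have := congrArg Subtype.val (LinearMap.congr_fun hxy ⟨u, huN⟩)
    exact Subtype.ext (hu.mul_left_injective this)
  · have hf := linearMap_apply_eq_mul_of_isUnit S f hu huN
    refine ⟨⟨f ⟨u, huN⟩ * ↑hu.unit⁻¹, fun y hy => hf ⟨y, hy⟩ ▸ (f ⟨y, hy⟩).2⟩, ?_⟩
    ext n
    exact (hf n).symm

noncomputable def oneDivEquivDual (S : Submonoid R) [IsLocalization S A] [FaithfulSMul R A]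
    {N : Submodule R A} {u : A} (hu : IsUnit u) (huN : u ∈ N) :
    ↥(1 / N) ≃ₗ[R] Module.Dual R N :=
  divEquivLinearMap S 1 hu huN ≪≫ₗ LinearEquiv.congrRight (Submodule.oneLinearEquiv R A).symm

end IsLocalization

open Submodule IsLocalization in
/-- if `I` is a regular stable trace ideal of a commutative Noetherian
ring `R`, then `S := (I : I)` is a module finite birational extension of `R` with
`S ≅ Hom_R(S, R)`, i.e. `(R : (I : I)) ≅ (I : I)`. -/
theorem colon_self_birational_and_selfdual_of_stable_trace (R : Type u) [CommRing R]
    [IsNoetherianRing R] (I : Ideal R)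
    (hreg : ∃ a ∈ I, a ∈ nonZeroDivisors R)
    (hstable : Nonempty ((↥I) ≃ₗ[R] ((↥I) →ₗ[R] (↥I))))
    (htrace : ∃ (M : Type u) (_ : AddCommGroup M) (_ : Module R M),
      Module.Finite R M ∧ I = traceIdeal R M) :
    (1 : Submodule R (FractionRing R)) ≤ I.toFrac / I.toFrac ∧
    (I.toFrac / I.toFrac) * (I.toFrac / I.toFrac) ≤ I.toFrac / I.toFrac ∧
    Module.Finite R (↥(I.toFrac / I.toFrac)) ∧
    Nonempty ((↥((1 : Submodule R (FractionRing R)) / (I.toFrac / I.toFrac))) ≃ₗ[R]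
      (↥(I.toFrac / I.toFrac))) := by
  obtain ⟨a, haI, ha⟩ := hreg
  obtain ⟨M, _, _, -, hIM⟩ := htrace
  set J := I.toFrac
  have hJ1 : J ≤ 1 := by
    rw [one_eq_range]
    exact LinearMap.map_le_range
  have hS : J / J = 1 / J :=
    le_antisymm (div_le_div_of_le_left hJ1 J) (one_div_le_div_self_of_eq_traceIdeal hIM)
  have hu : IsUnit (algebraMap R (FractionRing R) a) := map_units _ (⟨a, ha⟩ : nonZeroDivisors R)
  have haJ : algebraMap R (FractionRing R) a ∈ J := mem_map_of_mem haI
  have hS1 : (1 : FractionRing R) ∈ J / J := one_mem_div.mpr le_rfl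
  let eIJ : I ≃ₗ[R] J := equivMapOfInjective _ (FaithfulSMul.algebraMap_injective R _) I
  let eSI : ↥(J / J) ≃ₗ[R] I :=
    divEquivLinearMap (nonZeroDivisors R) J hu haJ ≪≫ₗ (eIJ.arrowCongr eIJ).symm ≪≫ₗ
      hstable.some.symm
  refine ⟨one_le.mpr hS1, div_self_mul_div_self_le J,
    Module.Finite.iff_fg.mpr (fg_div_of_isUnit ((IsNoetherian.noetherian I).map _) hu haJ), ⟨?_⟩⟩
  exact oneDivEquivDual (nonZeroDivisors R) isUnit_one hS1 ≪≫ₗ eSI.symm.dualMap ≪≫ₗ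
    eIJ.symm.dualMap ≪≫ₗ (oneDivEquivDual (nonZeroDivisors R) hu haJ).symm ≪≫ₗ .ofEq _ _ hS.symm
end

section
/- Let R be a 1-dimensional Cohen–Macaulay local Noetherian ring and let I be an ideal of R for which there exists a nonzerodivisor x ∈ I with I² = xI and (xR :_R I) = I. Then I = I(R : I) = tr_R(I), i.e. I is a trace ideal of R. -/
set_option maxHeartbeats 1000000
set_option synthInstance.maxHeartbeats 400000

open CategoryTheory

universe u

/-! An element `c` with `c I ⊆ xR` lies in `(xR :_R I) = I`, so for `i ∈ I` the product `i c`
lies in `I² = xI`; cancelling the nonzerodivisor `x` puts `i z` (for `z ∈ (R : I)`, taking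
`c = xz`) and `f i` (for `f : I → R`, taking `c = f x`) back into `I`. -/

namespace Ideal

variable {R : Type u} [CommRing R] {I : Ideal R} {x : R}

theorem mem_of_forall_dvd_mul (hcolon : Submodule.colon (span {x}) I = I) {c : R}
    (h : ∀ j ∈ I, x ∣ c * j) : c ∈ I := by
  rw [← hcolon, Submodule.mem_colon]
  exact fun j hj => mem_span_singleton.mpr (h j hj)

theorem mem_of_mul_eq_mul_of_mul_self_eq (hI2 : I * I = span {x} * I)
    (hxnzd : x ∈ nonZeroDivisors R) {a i c : R} (hi : i ∈ I) (hc : c ∈ I)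
    (h : x * a = i * c) : a ∈ I := by
  obtain ⟨t, ht, hxt⟩ := Submodule.mem_span_singleton_mul.mp (hI2 ▸ mul_mem_mul hi hc)
  rwa [(mul_cancel_left_mem_nonZeroDivisors hxnzd).mp (hxt.trans h.symm)] at ht

theorem le_traceIdeal : I ≤ traceIdeal R I :=
  fun a ha => le_iSup (fun f : I →ₗ[R] R => LinearMap.range f) I.subtype ⟨⟨a, ha⟩, rfl⟩

theorem mul_linearMap_apply_comm (f : I →ₗ[R] R) (a b : I) : a * f b = b * f a :=
  calc (a : R) * f b = f ((a : R) • b) := (map_smul f _ b).symm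
    _ = f ((b : R) • a) := congrArg f (Subtype.ext (mul_comm _ _))
    _ = b * f a := map_smul f _ a

theorem traceIdeal_le (hx : x ∈ I) (hxnzd : x ∈ nonZeroDivisors R)
    (hI2 : I * I = span {x} * I) (hcolon : Submodule.colon (span {x}) I = I) :
    traceIdeal R I ≤ I := by
  refine iSup_le fun f => ?_
  rintro _ ⟨i, rfl⟩
  have hfx : f ⟨x, hx⟩ ∈ I := mem_of_forall_dvd_mul hcolon fun j hj =>
    ⟨f ⟨j, hj⟩, by rw [mul_comm]; exact mul_linearMap_apply_comm f ⟨j, hj⟩ ⟨x, hx⟩⟩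
  exact mem_of_mul_eq_mul_of_mul_self_eq hI2 hxnzd i.2 hfx
    (mul_linearMap_apply_comm f ⟨x, hx⟩ i)

theorem le_toFrac_mul_one_div : I.toFrac ≤ I.toFrac * (1 / I.toFrac) := by
  have hI1 : I.toFrac ≤ 1 := by
    rw [Submodule.one_eq_range]; exact LinearMap.map_le_range
  calc I.toFrac = I.toFrac * 1 := (mul_one _).symm
    _ ≤ I.toFrac * (1 / I.toFrac) := mul_le_mul_right (Submodule.one_le_one_div.mpr hI1) _

theorem exists_algebraMap_mul_eq_of_mem_one_div {z : FractionRing R}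
    (hz : z ∈ 1 / I.toFrac) {r : R} (hr : algebraMap R (FractionRing R) x * z = algebraMap R _ r)
    {p : R} (hp : p ∈ I) :
    ∃ s, algebraMap R (FractionRing R) p * z = algebraMap R _ s ∧ x * s = p * r := by
  obtain ⟨s, hs⟩ := Submodule.mem_one.mp
    (Submodule.mem_div_iff_forall_mul_mem.mp hz _ ⟨p, hp, rfl⟩)
  refine ⟨s, by rw [hs, mul_comm]; rfl, IsFractionRing.injective R (FractionRing R) ?_⟩
  rw [map_mul, map_mul, ← hr, hs, Algebra.linearMap_apply]
  ring

theorem toFrac_mul_one_div_le (hx : x ∈ I) (hxnzd : x ∈ nonZeroDivisors R)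
    (hI2 : I * I = span {x} * I) (hcolon : Submodule.colon (span {x}) I = I) :
    I.toFrac * (1 / I.toFrac) ≤ I.toFrac := by
  rw [Submodule.mul_le]
  rintro _ ⟨i, hi, rfl⟩ z hz
  obtain ⟨r, hr⟩ := Submodule.mem_one.mp
    (Submodule.mem_div_iff_forall_mul_mem.mp hz _ ⟨x, hx, rfl⟩)
  have hr' : algebraMap R (FractionRing R) x * z = algebraMap R _ r := by
    rw [hr, mul_comm]; rfl
  have hrI : r ∈ I := mem_of_forall_dvd_mul hcolon fun p hp => by
    obtain ⟨s, -, hs⟩ := exists_algebraMap_mul_eq_of_mem_one_div hz hr' hp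
    exact ⟨s, by rw [mul_comm, hs]⟩
  obtain ⟨s, hiz, hs⟩ := exists_algebraMap_mul_eq_of_mem_one_div hz hr' hi
  exact ⟨s, mem_of_mul_eq_mul_of_mul_self_eq hI2 hxnzd hi hrI hs, hiz.symm⟩

end Ideal

theorem ulrich_type_ideal_is_trace_general (R : Type u) [CommRing R]
    (I : Ideal R) (x : R) (hx : x ∈ I) (hxnzd : x ∈ nonZeroDivisors R)
    (hI2 : I * I = Ideal.span {x} * I)
    (hcolon : Submodule.colon (Ideal.span {x}) I = I) :
    I.toFrac = I.toFrac * ((1 : Submodule R (FractionRing R)) / I.toFrac) ∧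
    I = traceIdeal R I :=
  ⟨le_antisymm Ideal.le_toFrac_mul_one_div (Ideal.toFrac_mul_one_div_le hx hxnzd hI2 hcolon),
    le_antisymm Ideal.le_traceIdeal (Ideal.traceIdeal_le hx hxnzd hI2 hcolon)⟩

/-- over a 1-dimensional Cohen–Macaulay local Noetherian ring `R`, an
ideal `I` with a nonzerodivisor `x ∈ I` satisfying `I² = xI` and `(xR :_R I) = I`
satisfies `I = I(R : I) = tr_R(I)`; in particular `I` is a trace ideal. -/
theorem ulrich_type_ideal_is_trace (R : Type u) [CommRing R]
    (hCM : IsCohenMacaulayLocalRing R) (hdim : ringKrullDim R = 1)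
    (I : Ideal R) (x : R) (hx : x ∈ I) (hxnzd : x ∈ nonZeroDivisors R)
    (hI2 : I * I = Ideal.span {x} * I)
    (hcolon : Submodule.colon (Ideal.span {x}) I = I) :
    I.toFrac = I.toFrac * ((1 : Submodule R (FractionRing R)) / I.toFrac) ∧
    I = traceIdeal R I :=
  ulrich_type_ideal_is_trace_general R I x hx hxnzd hI2 hcolon
end
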